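/- arXiv:2210.09614 — 7 statements merged into one kernel-verified Lean document; each statement's English description precedes it below -/
import Mathlib

section
/- For any finite nonempty subset A of an abelian group G and integers k, l ≥ 2, the sum over all (x_1,...,x_{k-1}) ∈ G^{k-1} of |A ∩ (A+x_1) ∩ ... ∩ (A+x_{k-1})|^l equals the sum over all (y_1,...,y_{l-1}) ∈ G^{l-1} of |A ∩ (A+y_1) ∩ ... ∩ (A+y_{l-1})|^k. -/
/-!
`∑ₓ R(x)^l` counts the pairs `(x, a) ∈ G^{k-1} × A^l` with `aⱼ - xᵢ ∈ A` for all `i, j`.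
Adjoining `x₀ = 0`, these are the families `(xᵢ)_{i<k}`, `(aⱼ)_{j<l}` with `x₀ = 0` and every
difference `aⱼ - xᵢ` in `A`. This condition is preserved by a common translation and by the swap
`(x, a) ↦ (-a, -x)`; translating by `-a₀` and swapping trades the normalisation `x₀ = 0` for
`a₀ = 0`, and so identifies the count for `(k, l)` with the one for `(l, k)`.
-/

open Finset

/-- `R A x` = |A ∩ (A+x 0) ∩ ... ∩ (A+x (k-1))| : the number of `a ∈ A` with
`a ∈ A + x i` (equivalently `a - x i ∈ A`) for every `i`. -/
def R {G : Type*} [AddCommGroup G] [DecidableEq G] (A : Finset G) {k : ℕ}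
    (x : Fin k → G) : ℕ :=
  (A.filter fun a => ∀ i, a - x i ∈ A).card

open Fintype Pointwise

section Counting

variable {G : Type*} [AddCommGroup G] [DecidableEq G] (A : Finset G)

/-- The bound `x i ∈ A - A` only makes the set finite: it follows from the other conditions
as soon as `n ≠ 0`. -/
def shiftIncidences (m n : ℕ) : Finset ((Fin m → G) × (Fin n → G)) :=
  (piFinset (fun _ => A - A) ×ˢ piFinset (fun _ => A)).filter fun p => ∀ j i, p.2 j - p.1 i ∈ A

lemma mem_shiftIncidences_succ {m n : ℕ} {p : (Fin m → G) × (Fin (n + 1) → G)} :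
    p ∈ shiftIncidences A m (n + 1) ↔ (∀ j, p.2 j ∈ A) ∧ ∀ j i, p.2 j - p.1 i ∈ A := by
  simp only [shiftIncidences, mem_filter, mem_product, mem_piFinset]
  refine ⟨fun h => ⟨h.1.2, h.2⟩, fun h => ⟨⟨fun i => ?_, h.1⟩, h.2⟩⟩
  simpa using sub_mem_sub (h.1 0) (h.2 0 i)

lemma mem_sub_of_R_ne_zero {m : ℕ} {x : Fin m → G} (hx : R A x ≠ 0) (i : Fin m) :
    x i ∈ A - A := by
  obtain ⟨a, ha⟩ := card_ne_zero.1 hx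
  rw [mem_filter] at ha
  simpa using sub_mem_sub ha.1 (ha.2 i)

lemma R_pow_eq_card {m : ℕ} (x : Fin m → G) (n : ℕ) :
    R A x ^ n = #{a ∈ piFinset fun _ : Fin n => A | ∀ j i, a j - x i ∈ A} := by
  rw [R, ← card_piFinset_const]
  congr 1
  ext a
  simp only [mem_piFinset, mem_filter, forall_and]

lemma finsum_R_pow_eq_card (m n : ℕ) :
    ∑ᶠ x : Fin m → G, R A x ^ (n + 1) = #(shiftIncidences A m (n + 1)) := by
  have hsupport : (Function.support fun x : Fin m → G => R A x ^ (n + 1)) ⊆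
      ↑(piFinset fun _ : Fin m => A - A) := fun x hx =>
    mem_piFinset.2 (mem_sub_of_R_ne_zero A (pow_ne_zero_iff n.succ_ne_zero |>.1 hx))
  rw [finsum_eq_sum_of_support_subset _ hsupport, shiftIncidences, card_filter, sum_product]
  exact sum_congr rfl fun x _ => by rw [R_pow_eq_card, card_filter]

end Counting

section Transpose

variable {G : Type*} [AddCommGroup G]

/-- Translate by `-a₀`, then swap the two families with a sign change. -/
def transposeShift (m n : ℕ) (p : (Fin m → G) × (Fin (n + 1) → G)) :
    (Fin n → G) × (Fin (m + 1) → G) :=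
  (fun j => p.2 0 - p.2 j.succ, Fin.cons (p.2 0) fun i => p.2 0 - p.1 i)

lemma transposeShift_transposeShift (m n : ℕ) (p : (Fin m → G) × (Fin (n + 1) → G)) :
    transposeShift n m (transposeShift m n p) = p := by
  refine Prod.ext (funext fun i => ?_) (funext fun j => Fin.cases ?_ (fun j => ?_) j) <;>
    simp [transposeShift]

lemma transposeShift_mem_shiftIncidences [DecidableEq G] (A : Finset G) {m n : ℕ}
    {p : (Fin m → G) × (Fin (n + 1) → G)} (hp : p ∈ shiftIncidences A m (n + 1)) :
    transposeShift m n p ∈ shiftIncidences A n (m + 1) := by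
  rw [mem_shiftIncidences_succ] at hp ⊢
  obtain ⟨ha, hdiff⟩ := hp
  refine ⟨fun i => Fin.cases (ha 0) (hdiff 0) i, fun i j => Fin.cases ?_ (fun i => ?_) i⟩
  · simpa [transposeShift] using ha j.succ
  · simpa [transposeShift] using hdiff j.succ i

lemma card_shiftIncidences_comm [DecidableEq G] (A : Finset G) (m n : ℕ) :
    #(shiftIncidences A m (n + 1)) = #(shiftIncidences A n (m + 1)) :=
  card_nbij' (transposeShift m n) (transposeShift n m)
    (fun _ => transposeShift_mem_shiftIncidences A) (fun _ => transposeShift_mem_shiftIncidences A)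
    (fun p _ => transposeShift_transposeShift m n p) (fun p _ => transposeShift_transposeShift n m p)

end Transpose

theorem stmt0_general {G : Type*} [AddCommGroup G] [DecidableEq G] (A : Finset G)
    (k l : ℕ) (hk : 2 ≤ k) (hl : 2 ≤ l) :
    ∑ᶠ x : Fin (k - 1) → G, (R A x) ^ l = ∑ᶠ y : Fin (l - 1) → G, (R A y) ^ k := by
  obtain ⟨m, rfl⟩ : ∃ m, k = m + 2 := ⟨k - 2, by omega⟩
  obtain ⟨n, rfl⟩ : ∃ n, l = n + 2 := ⟨l - 2, by omega⟩
  show ∑ᶠ x : Fin (m + 1) → G, R A x ^ (n + 1 + 1) = ∑ᶠ y : Fin (n + 1) → G, R A y ^ (m + 1 + 1)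
  rw [finsum_R_pow_eq_card, finsum_R_pow_eq_card, card_shiftIncidences_comm]

theorem stmt0 {G : Type*} [AddCommGroup G] [DecidableEq G] (A : Finset G)
    (hA : A.Nonempty) (k l : ℕ) (hk : 2 ≤ k) (hl : 2 ≤ l) :
    ∑ᶠ x : Fin (k - 1) → G, (R A x) ^ l = ∑ᶠ y : Fin (l - 1) → G, (R A y) ^ k :=
  stmt0_general A k l hk hl
end

section
/- Let p be prime, k ≥ 2 an integer, and fix d_1,...,d_{k-1} ∈ ℤ/pℤ. For 1 ≤ n ≤ p−1 let J_n := {1,2,...,n} ⊆ ℤ/pℤ and f(n) := |J_n ∩ (J_n+d_1) ∩ ... ∩ (J_n+d_{k-1})|. Then the sequence f is convex: f(n) − f(n−1) ≤ f(n+1) − f(n) for all 2 ≤ n ≤ p−2. -/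
/-!
Write `S(A) = {a ∈ A | a - dᵢ ∈ A for all i}`, so that `f n = #S(Jₙ)`. Every element of
`S(Jₙ) \ S(Jₙ₋₁)` has `n` among `a, a - d₁, …, a - d_{k-1}`, since `Jₙ \ Jₙ₋₁ = {n}`. Translating by
`1` therefore maps `S(Jₙ) \ S(Jₙ₋₁)` injectively into `S(Jₙ₊₁) \ S(Jₙ)`: the image lies in `Jₙ₊₁`
and has `n + 1 ∉ Jₙ` among its translates, which needs `n + 1 < p`.
-/

open Finset

section InterTranslates

variable {G ι : Type*} [AddCommGroup G] [DecidableEq G] [Fintype ι]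

def interTranslates (d : ι → G) (A : Finset G) : Finset G :=
  A.filter fun a => ∀ i, a - d i ∈ A

variable (d : ι → G) {A B C : Finset G}

lemma mem_interTranslates {a : G} : a ∈ interTranslates d A ↔ a ∈ A ∧ ∀ i, a - d i ∈ A :=
  mem_filter

lemma interTranslates_mono (hAB : A ⊆ B) : interTranslates d A ⊆ interTranslates d B :=
  fun _ ha => by
    rw [mem_interTranslates] at ha ⊢
    exact ⟨hAB ha.1, fun i => hAB (ha.2 i)⟩

lemma add_mem_interTranslates_sdiff {x t a : G} (hA : B \ A ⊆ {x}) (hB : ∀ b ∈ B, b + t ∈ C)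
    (hx : x + t ∉ B) (ha : a ∈ interTranslates d B \ interTranslates d A) :
    a + t ∈ interTranslates d C \ interTranslates d B := by
  simp only [mem_sdiff, mem_interTranslates, not_and, not_forall] at ha ⊢
  obtain ⟨⟨haB, hdB⟩, haA⟩ := ha
  have shift (i) : a + t - d i = a - d i + t := by abel
  refine ⟨⟨hB a haB, fun i => shift i ▸ hB _ (hdB i)⟩, fun _ => ?_⟩
  by_cases ha' : a ∈ A
  · obtain ⟨i, hi⟩ := haA ha'
    have : a - d i = x := mem_singleton.1 (hA (mem_sdiff.2 ⟨hdB i, hi⟩))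
    exact ⟨i, by rwa [shift, this]⟩
  · have : a = x := mem_singleton.1 (hA (mem_sdiff.2 ⟨haB, ha'⟩))
    exact absurd (this ▸ ‹a + t ∈ B›) hx

lemma card_interTranslates_add_le (hAB : A ⊆ B) (hBC : B ⊆ C) {x t : G} (hA : B \ A ⊆ {x})
    (hB : ∀ b ∈ B, b + t ∈ C) (hx : x + t ∉ B) :
    #(interTranslates d B) + #(interTranslates d B) ≤
      #(interTranslates d A) + #(interTranslates d C) := by
  have hinj : #(interTranslates d B \ interTranslates d A) ≤
      #(interTranslates d C \ interTranslates d B) :=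
    card_le_card_of_injOn (· + t) (fun a ha => add_mem_interTranslates_sdiff d hA hB hx ha)
      (fun _ _ _ _ h => add_right_cancel h)
  have hSAB := interTranslates_mono d hAB
  have hSBC := interTranslates_mono d hBC
  rw [card_sdiff_of_subset hSAB, card_sdiff_of_subset hSBC] at hinj
  have hcardAB := card_le_card hSAB
  have hcardBC := card_le_card hSBC
  omega

end InterTranslates

section Intervals

variable {R : Type*} [DecidableEq R]

lemma image_Icc_sdiff_subset [NatCast R] (m : ℕ) :
    (Icc 1 m).image (Nat.cast : ℕ → R) \ (Icc 1 (m - 1)).image Nat.cast ⊆ {(m : R)} := by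
  intro x hx
  simp only [mem_sdiff, mem_image, mem_Icc, not_exists, not_and] at hx
  obtain ⟨⟨j, ⟨hj1, hjm⟩, rfl⟩, hnot⟩ := hx
  obtain rfl : j = m := by
    by_contra hjm'
    exact hnot j ⟨hj1, by omega⟩ rfl
  exact mem_singleton_self _

lemma add_one_mem_image_Icc [AddMonoidWithOne R] {m : ℕ} {x : R}
    (hx : x ∈ (Icc 1 m).image (Nat.cast : ℕ → R)) :
    x + 1 ∈ (Icc 1 (m + 1)).image (Nat.cast : ℕ → R) := by
  obtain ⟨j, hj, rfl⟩ := mem_image.1 hx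
  rw [mem_Icc] at hj
  exact mem_image.2 ⟨j + 1, mem_Icc.2 ⟨by omega, by omega⟩, Nat.cast_succ j⟩

lemma natCast_notMem_image_Icc {p m n : ℕ} (hnm : n < m) (hm : m < p) :
    (m : ZMod p) ∉ (Icc 1 n).image (Nat.cast : ℕ → ZMod p) := by
  simp only [mem_image, mem_Icc, not_exists, not_and]
  intro j hj hjm
  rw [ZMod.natCast_eq_natCast_iff', Nat.mod_eq_of_lt (by omega), Nat.mod_eq_of_lt hm] at hjm
  omega

end Intervals

theorem stmt4_general (p : ℕ) (k : ℕ) (d : Fin (k - 1) → ZMod p)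
    (J : ℕ → Finset (ZMod p))
    (hJ : ∀ n, J n = (Finset.Icc 1 n).image (Nat.cast : ℕ → ZMod p))
    (f : ℕ → ℕ)
    (hf : ∀ n, f n = ((J n).filter fun a => ∀ i, a - d i ∈ J n).card)
    (n : ℕ) (h2 : 2 ≤ n) (hn : n ≤ p - 2) :
    f n + f n ≤ f (n - 1) + f (n + 1) := by
  have hf' (m : ℕ) : f m = #(interTranslates d (J m)) := by
    rw [hf m, interTranslates]
    congr! -- the two filters differ only in their `Decidable` instances
  obtain rfl : J = fun m => (Icc 1 m).image (Nat.cast : ℕ → ZMod p) := funext hJ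
  simp only [hf']
  refine card_interTranslates_add_le d (x := (n : ZMod p)) (t := 1)
    (image_subset_image (Icc_subset_Icc_right (Nat.sub_le n 1)))
    (image_subset_image (Icc_subset_Icc_right (n.le_add_right 1)))
    (image_Icc_sdiff_subset n) (fun _ => add_one_mem_image_Icc) ?_
  rw [← Nat.cast_succ]
  exact natCast_notMem_image_Icc (Nat.lt_succ_self n) (by omega)

theorem stmt4 (p : ℕ) (hp : p.Prime) (k : ℕ) (hk : 2 ≤ k) (d : Fin (k - 1) → ZMod p)
    (J : ℕ → Finset (ZMod p))
    (hJ : ∀ n, J n = (Finset.Icc 1 n).image (Nat.cast : ℕ → ZMod p))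
    (f : ℕ → ℕ)
    (hf : ∀ n, f n = ((J n).filter fun a => ∀ i, a - d i ∈ J n).card)
    (n : ℕ) (h2 : 2 ≤ n) (hn : n ≤ p - 2) :
    f n + f n ≤ f (n - 1) + f (n + 1) :=
  stmt4_general p k d J hJ f hf n h2 hn
end

section
/- Let p ≥ 5 be prime and let D = {−m, −m+1, ..., m} ⊆ ℤ/pℤ with m < p/3, so |D| = 2m+1. Then for every integer k ≥ 1, T_D^{(k)}(D) = (m+1)^{k+1} − m^{k+1}. -/
open Finset

/-- `T D A k` = number of `k`-tuples `(a_1, ..., a_k) ∈ A^k` with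
`a_i - a_j ∈ D` for all `i, j`. -/
def T {G : Type*} [AddCommGroup G] [DecidableEq G] (D A : Finset G) (k : ℕ) : ℕ :=
  ((Fintype.piFinset fun _ : Fin k => A).filter fun a => ∀ i j, a i - a j ∈ D).card

/-!
Since `3m < p`, reduction mod `p` is injective on `[-m, m]`, and for a difference `d` of two
elements of `[-m, m]` the residue of `d` lies in `D` iff `|d| ≤ m`. Hence `T_D^{(k)}(D)` counts the
integer tuples `x ∈ ℤ^k` such that `(0, x_1, …, x_k)` has all pairwise differences at most `m`.
Translating such a tuple so that its maximum becomes `m` is a bijection onto the tuples in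
`[0, m]^{k+1}` that attain the value `m`, and there are `(m+1)^{k+1} - m^{k+1}` of those.
-/

open Fintype

lemma ZMod.eq_of_intCast_eq_of_abs_sub_lt {p : ℕ} {a b : ℤ} (hab : |a - b| < p)
    (h : (a : ZMod p) = b) : a = b := by
  have hdvd : (p : ℤ) ∣ b - a := (ZMod.intCast_eq_intCast_iff_dvd_sub a b p).1 h
  have := Int.eq_zero_of_abs_lt_dvd hdvd (by rwa [abs_sub_comm])
  omega

lemma intCast_mem_image_Icc_iff {p m : ℕ} (hm : 3 * m < p) {d : ℤ}
    (h₁ : -(2 * m : ℤ) ≤ d) (h₂ : d ≤ 2 * m) :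
    (d : ZMod p) ∈ (Icc (-(m : ℤ)) m).image (Int.cast : ℤ → ZMod p) ↔ d ∈ Icc (-(m : ℤ)) m := by
  refine ⟨fun hd => ?_, fun hd => mem_image_of_mem _ hd⟩
  obtain ⟨e, he, hed⟩ := mem_image.1 hd
  rw [mem_Icc] at he
  rw [← ZMod.eq_of_intCast_eq_of_abs_sub_lt (abs_lt.2 ⟨by omega, by omega⟩) hed]
  exact mem_Icc.2 he

lemma T_image_intCast_Icc_eq_card_filter {p m : ℕ} (hm : 3 * m < p) (k : ℕ) :
    T ((Icc (-(m : ℤ)) m).image (Int.cast : ℤ → ZMod p))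
        ((Icc (-(m : ℤ)) m).image (Int.cast : ℤ → ZMod p)) k =
      #{x ∈ piFinset fun _ : Fin k => Icc (-(m : ℤ)) m | ∀ i j, x i - x j ≤ (m : ℤ)} := by
  rw [T, piFinset_image (fun _ => Int.cast), filter_image, card_image_of_injOn]
  · congr 1
    refine filter_congr fun x hx => ?_
    have hbound := fun i => mem_Icc.1 (mem_piFinset.1 hx i)
    simp only [← Int.cast_sub]
    constructor
    · intro h i j
      have := (intCast_mem_image_Icc_iff hm (by grind) (by grind)).1 (h i j)
      exact (mem_Icc.1 this).2
    · intro h i j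
      refine (intCast_mem_image_Icc_iff hm (by grind) (by grind)).2 (mem_Icc.2 ⟨?_, h i j⟩)
      linarith [h j i]
  · intro x hx y hy hxy
    have hx := fun i => mem_Icc.1 (mem_piFinset.1 (mem_filter.1 hx).1 i)
    have hy := fun i => mem_Icc.1 (mem_piFinset.1 (mem_filter.1 hy).1 i)
    funext i
    exact ZMod.eq_of_intCast_eq_of_abs_sub_lt
      (abs_lt.2 ⟨by linarith [hx i, hy i], by linarith [hx i, hy i]⟩) (congrFun hxy i)

lemma card_piFinset_sdiff_piFinset {α : Type*} [DecidableEq α] {s t : Finset α} (h : t ⊆ s)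
    (n : ℕ) :
    #((piFinset fun _ : Fin n => s) \ piFinset fun _ => t) = #s ^ n - #t ^ n := by
  rw [card_sdiff_of_subset (piFinset_subset _ _ fun _ => h), card_piFinset_const,
    card_piFinset_const]

section TranslateMax

variable {ι : Type*} [Fintype ι] [Nonempty ι]

def translateMaxTo (m : ℤ) (y : ι → ℤ) : ι → ℤ :=
  fun i => y i + (m - univ.sup' univ_nonempty y)

variable {m : ℤ}

lemma translateMaxTo_mem_Icc {y : ι → ℤ} (hy : ∀ i j, y i - y j ≤ m) (i : ι) :
    translateMaxTo m y i ∈ Icc 0 m := by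
  obtain ⟨j, -, hj⟩ := exists_mem_eq_sup' univ_nonempty y
  have := le_sup' y (mem_univ i)
  have := hy j i
  exact mem_Icc.2 ⟨by unfold translateMaxTo; omega, by unfold translateMaxTo; omega⟩

lemma exists_translateMaxTo_eq (y : ι → ℤ) : ∃ i, translateMaxTo m y i = m := by
  obtain ⟨j, -, hj⟩ := exists_mem_eq_sup' univ_nonempty y
  exact ⟨j, by unfold translateMaxTo; omega⟩

lemma translateMaxTo_sub_const {z : ι → ℤ} (hz : ∀ i, z i ≤ m) {i₀ : ι} (hi₀ : z i₀ = m)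
    (c : ℤ) : translateMaxTo m (fun i => z i - c) = z := by
  have hsup : univ.sup' univ_nonempty (fun i => z i - c) = m - c :=
    le_antisymm (sup'_le _ _ fun i _ => by linarith [hz i])
      (le_sup'_of_le _ (mem_univ i₀) (by rw [hi₀]))
  funext i
  rw [translateMaxTo, hsup]
  ring

end TranslateMax

lemma cons_zero_sub_cons_zero_le {m k : ℕ} {x : Fin k → ℤ} (hx : ∀ i, x i ∈ Icc (-(m : ℤ)) m)
    (h : ∀ i j, x i - x j ≤ (m : ℤ)) (i j : Fin (k + 1)) :
    (Fin.cons 0 x : Fin (k + 1) → ℤ) i - (Fin.cons 0 x : Fin (k + 1) → ℤ) j ≤ m := by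
  cases i using Fin.cases <;> cases j using Fin.cases
  · simp
  · simpa [neg_le] using (mem_Icc.1 (hx _)).1
  · simpa using (mem_Icc.1 (hx _)).2
  · simpa using h _ _

lemma card_filter_sub_le_eq_card_sdiff (m k : ℕ) :
    #{x ∈ piFinset fun _ : Fin k => Icc (-(m : ℤ)) m | ∀ i j, x i - x j ≤ (m : ℤ)} =
      #((piFinset fun _ : Fin (k + 1) => Icc (0 : ℤ) m) \ piFinset fun _ => Ico 0 m) := by
  refine card_nbij' (fun x => translateMaxTo m (Fin.cons 0 x : Fin (k + 1) → ℤ))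
    (fun z i => z i.succ - z 0) ?_ ?_ ?_ ?_
  · intro x hx
    simp only [coe_filter, mem_piFinset, Set.mem_ofPred_eq] at hx
    simp only [coe_sdiff, Set.mem_sdiff, mem_coe, mem_piFinset, mem_Ico, not_forall, not_and,
      not_lt]
    obtain ⟨i, hi⟩ := exists_translateMaxTo_eq (m := (m : ℤ)) (Fin.cons 0 x : Fin (k + 1) → ℤ)
    exact ⟨translateMaxTo_mem_Icc (cons_zero_sub_cons_zero_le hx.1 hx.2), i, fun _ => hi.ge⟩
  · intro z hz
    simp only [coe_sdiff, Set.mem_sdiff, mem_coe, mem_piFinset, mem_Icc] at hz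
    simp only [coe_filter, mem_piFinset, mem_Icc, Set.mem_ofPred_eq]
    have := hz.1
    exact ⟨fun i => ⟨by grind, by grind⟩, fun i j => by grind⟩
  · intro x _
    funext i
    simp [translateMaxTo]
  · intro z hz
    simp only [coe_sdiff, Set.mem_sdiff, mem_coe, mem_piFinset, mem_Icc, mem_Ico, not_forall,
      not_and, not_lt] at hz
    obtain ⟨hz, i₀, hi₀⟩ := hz
    have hcons : (Fin.cons 0 (fun i => z i.succ - z 0) : Fin (k + 1) → ℤ) = fun i => z i - z 0 := by
      funext i
      cases i using Fin.cases <;> simp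
    simp only [hcons]
    exact translateMaxTo_sub_const (fun i => (hz i).2) (le_antisymm (hz i₀).2 (hi₀ (hz i₀).1)) _

theorem stmt5_general (p : ℕ) (m : ℕ) (hm : 3 * m < p)
    (D : Finset (ZMod p))
    (hD : D = (Finset.Icc (-(m : ℤ)) m).image (Int.cast : ℤ → ZMod p))
    (k : ℕ) :
    T D D k = (m + 1) ^ (k + 1) - m ^ (k + 1) := by
  rw [hD, T_image_intCast_Icc_eq_card_filter hm, card_filter_sub_le_eq_card_sdiff,
    card_piFinset_sdiff_piFinset Ico_subset_Icc_self, Int.card_Icc, Int.card_Ico]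
  simp

theorem stmt5 (p : ℕ) (hp : p.Prime) (hp5 : 5 ≤ p) (m : ℕ) (hm : 3 * m < p)
    (D : Finset (ZMod p))
    (hD : D = (Finset.Icc (-(m : ℤ)) m).image (Int.cast : ℤ → ZMod p))
    (k : ℕ) (hk : 1 ≤ k) :
    T D D k = (m + 1) ^ (k + 1) - m ^ (k + 1) :=
  stmt5_general p m hm D hD k
end

section
/- Let A be a finite nonempty subset of an abelian group G, D := A − A, and k ≥ 1 an integer. Then |A|^{2k+2} ≤ T_D^{(k)}(D) · (|A|^{k+1} + μ(A)^k · |A|^2), where μ(A) := max{|A ∩ (A+d)| : d ∈ D, d ≠ 0} (with μ(A) := 0 if A is a singleton). -/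
open Finset Pointwise

/-- `μ A` = the second largest value of `d ↦ |A ∩ (A + d)|`, i.e. the maximum of
`|A ∩ (A + d)|` over nonzero `d ∈ A - A` (equal to `0` if `A` is a singleton). -/
def mu {G : Type*} [AddCommGroup G] [DecidableEq G] (A : Finset G) : ℕ :=
  ((A - A).erase 0).sup fun d => (A ∩ A.image (· + d)).card

theorem stmt9 {G : Type*} [AddCommGroup G] [DecidableEq G] (A : Finset G)
    (hA : A.Nonempty) (k : ℕ) (hk : 1 ≤ k) :
    A.card ^ (2 * k + 2) ≤
      T (A - A) (A - A) k * (A.card ^ (k + 1) + mu A ^ k * A.card ^ 2) := by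
  classical
  set D : Finset G := A - A with hD
  set S : Finset (Fin k → G) :=
    (Fintype.piFinset fun _ : Fin k => D).filter fun a => ∀ i j, a i - a j ∈ D with hS
  have hTS : T D D k = S.card := rfl
  set F : (Fin k → G) → Finset G := fun d => A.filter fun a0 => ∀ i, a0 + d i ∈ A with hF
  set N : (Fin k → G) → ℕ := fun d => (F d).card with hNdef
  -- Step 1: ∑ d in S, N d = |A|^(k+1)
  have h1 : ∑ d ∈ S, N d = A.card ^ (k + 1) := by
    have key : (A ×ˢ Fintype.piFinset fun _ : Fin k => A).card
        = ∑ d ∈ S, ((A ×ˢ Fintype.piFinset fun _ : Fin k => A).filter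
            (fun p => (fun i => p.2 i - p.1) = d)).card := by
      apply Finset.card_eq_sum_card_fiberwise
      intro p hp
      simp only [Finset.mem_coe, Finset.mem_product, Fintype.mem_piFinset] at hp
      simp only [Finset.mem_coe, hS, Finset.mem_filter, Fintype.mem_piFinset]
      refine ⟨fun i => Finset.sub_mem_sub (hp.2 i) hp.1, fun i j => ?_⟩
      have : (p.2 i - p.1) - (p.2 j - p.1) = p.2 i - p.2 j := by abel
      rw [this]
      exact Finset.sub_mem_sub (hp.2 i) (hp.2 j)
    have fib : ∀ d ∈ S, ((A ×ˢ Fintype.piFinset fun _ : Fin k => A).filter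
        (fun p => (fun i => p.2 i - p.1) = d)).card = N d := by
      intro d _
      apply Finset.card_bij (fun p _ => p.1)
      · intro p hp
        simp only [Finset.mem_filter, Finset.mem_product, Fintype.mem_piFinset] at hp
        simp only [hF, Finset.mem_filter]
        refine ⟨hp.1.1, fun i => ?_⟩
        have := congrFun hp.2 i
        have h2 : p.1 + d i = p.2 i := by rw [← this]; abel
        rw [h2]; exact hp.1.2 i
      · intro p hp q hq h
        simp only [Finset.mem_filter] at hp hq
        ext
        · exact h
        · rename_i i
          have h1 := congrFun hp.2 i
          have h2 := congrFun hq.2 i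
          have h3 : p.2 i - q.1 = q.2 i - q.1 := by rw [← h] at h2 ⊢; rw [h1, h2]
          exact sub_left_injective h3
      · intro a0 ha0
        simp only [hF, Finset.mem_filter] at ha0
        refine ⟨(a0, fun i => a0 + d i), ?_, rfl⟩
        simp only [Finset.mem_filter, Finset.mem_product, Fintype.mem_piFinset]
        refine ⟨⟨ha0.1, fun i => ha0.2 i⟩, ?_⟩
        funext i; abel
    rw [Finset.sum_congr rfl fib] at key
    rw [← key, Finset.card_product, Fintype.card_piFinset]
    simp [pow_succ, mul_comm]
  -- the key per-pair bound
  have pairbound : ∀ a0 b0 : G, a0 ∈ A → b0 ∈ A → a0 ≠ b0 →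
      (S.filter fun d => (∀ i, a0 + d i ∈ A) ∧ ∀ i, b0 + d i ∈ A).card ≤ mu A ^ k := by
    intro a0 b0 ha hb hne
    have sub1 : (S.filter fun d => (∀ i, a0 + d i ∈ A) ∧ ∀ i, b0 + d i ∈ A) ⊆
        Fintype.piFinset fun _ : Fin k => (D.filter fun t => a0 + t ∈ A ∧ b0 + t ∈ A) := by
      intro d hd
      simp only [Finset.mem_filter, hS, Fintype.mem_piFinset] at hd ⊢
      exact fun i => ⟨hd.1.1 i, hd.2.1 i, hd.2.2 i⟩
    have cardpi : (Fintype.piFinset fun _ : Fin k =>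
        (D.filter fun t => a0 + t ∈ A ∧ b0 + t ∈ A)).card
        = (D.filter fun t => a0 + t ∈ A ∧ b0 + t ∈ A).card ^ k := by
      rw [Fintype.card_piFinset]; simp
    have hsingle : (D.filter fun t => a0 + t ∈ A ∧ b0 + t ∈ A).card ≤ mu A := by
      have hinj : (D.filter fun t => a0 + t ∈ A ∧ b0 + t ∈ A).card ≤
          (A ∩ A.image (· + (a0 - b0))).card := by
        apply Finset.card_le_card_of_injOn (fun t => a0 + t)
        · intro t ht
          simp only [Finset.mem_coe, Finset.mem_filter] at ht
          simp only [Finset.mem_coe, Finset.mem_inter, Finset.mem_image]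
          refine ⟨ht.2.1, ⟨b0 + t, ht.2.2, by abel⟩⟩
        · intro x _ y _ h
          exact add_left_cancel h
      refine hinj.trans ?_
      unfold mu
      apply Finset.le_sup (f := fun d => (A ∩ A.image (· + d)).card)
      simp only [Finset.mem_erase]
      exact ⟨sub_ne_zero.mpr hne, Finset.sub_mem_sub ha hb⟩
    calc (S.filter fun d => (∀ i, a0 + d i ∈ A) ∧ ∀ i, b0 + d i ∈ A).card
        ≤ _ := Finset.card_le_card sub1
      _ = _ := cardpi
      _ ≤ mu A ^ k := Nat.pow_le_pow_left hsingle k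
  -- Step 2: ∑ d in S, N d ^ 2 ≤ |A|^(k+1) + mu A ^ k * |A|^2
  have h2 : ∑ d ∈ S, N d ^ 2 ≤ A.card ^ (k + 1) + mu A ^ k * A.card ^ 2 := by
    have expand : ∀ d, N d ^ 2 = N d +
        ∑ p ∈ (A ×ˢ A).filter fun p : G × G => p.1 ≠ p.2,
          (if (∀ i, p.1 + d i ∈ A) ∧ (∀ i, p.2 + d i ∈ A) then 1 else 0) := by
      intro d
      have hsq : N d ^ 2 = (F d ×ˢ F d).card := by
        rw [Finset.card_product, sq]
      have split : (F d ×ˢ F d).card =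
          ((F d ×ˢ F d).filter fun p => p.1 = p.2).card +
          ((F d ×ˢ F d).filter fun p => p.1 ≠ p.2).card :=
        (Finset.card_filter_add_card_filter_not _).symm
      have diag : ((F d ×ˢ F d).filter fun p => p.1 = p.2).card = N d := by
        apply Finset.card_bij (fun p _ => p.1)
        · intro p hp
          simp only [Finset.mem_filter, Finset.mem_product] at hp
          exact hp.1.1
        · intro p hp q hq h
          simp only [Finset.mem_filter] at hp hq
          exact Prod.ext h (by rw [← hp.2, ← hq.2, h])
        · intro a ha
          exact ⟨(a, a), by simp [Finset.mem_filter, Finset.mem_product, ha], rfl⟩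
      have offdiag : ((F d ×ˢ F d).filter fun p => p.1 ≠ p.2).card =
          ∑ p ∈ (A ×ˢ A).filter fun p : G × G => p.1 ≠ p.2,
            (if (∀ i, p.1 + d i ∈ A) ∧ (∀ i, p.2 + d i ∈ A) then 1 else 0) := by
        rw [← Finset.card_filter]
        congr 1
        ext p
        simp only [Finset.mem_filter, Finset.mem_product, hF]
        tauto
      rw [hsq, split, diag, offdiag]
    rw [Finset.sum_congr rfl (fun d _ => expand d), Finset.sum_add_distrib, h1]
    gcongr
    rw [Finset.sum_comm]
    have inner : ∀ p ∈ (A ×ˢ A).filter fun p : G × G => p.1 ≠ p.2,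
        (∑ d ∈ S, if (∀ i, p.1 + d i ∈ A) ∧ (∀ i, p.2 + d i ∈ A) then 1 else 0)
          ≤ mu A ^ k := by
      intro p hp
      simp only [Finset.mem_filter, Finset.mem_product] at hp
      rw [← Finset.card_filter]
      exact pairbound p.1 p.2 hp.1.1 hp.1.2 hp.2
    calc ∑ p ∈ (A ×ˢ A).filter fun p : G × G => p.1 ≠ p.2,
          (∑ d ∈ S, if (∀ i, p.1 + d i ∈ A) ∧ (∀ i, p.2 + d i ∈ A) then 1 else 0)
        ≤ ∑ _p ∈ (A ×ˢ A).filter fun p : G × G => p.1 ≠ p.2, mu A ^ k :=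
          Finset.sum_le_sum inner
      _ = ((A ×ˢ A).filter fun p : G × G => p.1 ≠ p.2).card * mu A ^ k := by
          rw [Finset.sum_const, smul_eq_mul]
      _ ≤ A.card ^ 2 * mu A ^ k := by
          gcongr
          calc ((A ×ˢ A).filter fun p : G × G => p.1 ≠ p.2).card
              ≤ (A ×ˢ A).card := Finset.card_filter_le _ _
            _ = A.card ^ 2 := by rw [Finset.card_product, sq]
      _ = mu A ^ k * A.card ^ 2 := mul_comm _ _
  -- Step 3: Cauchy-Schwarz
  have h3 : (∑ d ∈ S, N d) ^ 2 ≤ S.card * ∑ d ∈ S, N d ^ 2 := by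
    have := sq_sum_le_card_mul_sum_sq (s := S) (f := fun d => (N d : ℤ))
    have h' : ((∑ d ∈ S, N d : ℕ) : ℤ) ^ 2 ≤ ((S.card * ∑ d ∈ S, N d ^ 2 : ℕ) : ℤ) := by
      push_cast
      exact this
    exact_mod_cast h'
  calc A.card ^ (2 * k + 2) = (A.card ^ (k + 1)) ^ 2 := by ring
    _ = (∑ d ∈ S, N d) ^ 2 := by rw [h1]
    _ ≤ S.card * ∑ d ∈ S, N d ^ 2 := h3
    _ ≤ S.card * (A.card ^ (k + 1) + mu A ^ k * A.card ^ 2) := by gcongr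
    _ = T (A - A) (A - A) k * (A.card ^ (k + 1) + mu A ^ k * A.card ^ 2) := by rw [hTS]
end

section
/- Let L > 1 and let A ⊆ {1, ..., ⌊L⌋} be a nonempty set of integers with |A − A| < |A|^{1+δ} for some δ ∈ (0, 1/3). Then there exists a nonzero integer d with |A ∩ (A+d)| > (|A|²/L)·(1 − 2δ·ln(2/δ)). -/
set_option maxHeartbeats 1000000

open Finset Pointwise

lemma exp_ge_e_mul (x : ℝ) : Real.exp 1 * x ≤ Real.exp x := by
  have h := Real.add_one_le_exp (x - 1)
  have : Real.exp x = Real.exp 1 * Real.exp (x - 1) := by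
    rw [← Real.exp_add]; ring_nf
  rw [this]
  have h1 : (0:ℝ) < Real.exp 1 := Real.exp_pos 1
  nlinarith

lemma key_numeric (n : ℕ) (δ : ℝ) (hδ0 : 0 < δ) (hδ1 : δ < 1/3)
    (hn7 : 7 ≤ n) (hnd : (13:ℝ)/7 < (n:ℝ) ^ δ) :
    2 / Real.sqrt n + 1 / n < 2 * δ * Real.log (2/δ) := by
  have hn0 : (0:ℝ) < n := by positivity
  have hn7' : (7:ℝ) ≤ n := by exact_mod_cast hn7
  -- log (13/7) ≥ 3/5
  have hexp3 : Real.exp 3 ≤ ((13:ℝ)/7)^(5:ℕ) := by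
    have h1 : Real.exp 3 = Real.exp 1 ^ (3:ℕ) := by
      rw [← Real.exp_nat_mul]; norm_num
    have h2 : Real.exp 1 ≤ 2.7182818286 := le_of_lt Real.exp_one_lt_d9
    have h3 : Real.exp 1 ^ (3:ℕ) ≤ (2.7182818286:ℝ)^(3:ℕ) := by
      exact pow_le_pow_left₀ (Real.exp_pos 1).le h2 3
    rw [h1]; refine h3.trans ?_; norm_num
  have hlog137 : (3/5 : ℝ) ≤ Real.log (13/7) := by
    rw [Real.le_log_iff_exp_le (by norm_num : (0:ℝ) < 13/7)]
    have h5 : Real.exp (3/5) ^ (5:ℕ) = Real.exp 3 := by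
      rw [← Real.exp_nat_mul]; norm_num
    refine le_of_pow_le_pow_left₀ (n := 5) (by norm_num) (by norm_num : (0:ℝ) ≤ 13/7) ?_
    rw [h5]; exact hexp3
  -- δ * log n > log (13/7)
  have hlogn : Real.log (13/7) < δ * Real.log n := by
    have := Real.log_lt_log (by norm_num : (0:ℝ) < 13/7) hnd
    rwa [Real.log_rpow hn0] at this
  have hlogn' : 3/(5*δ) < Real.log n := by
    rw [div_lt_iff₀ (by positivity)]
    nlinarith
  -- sqrt n > exp(3/(10 δ)) ≥ e * 3/(10δ)
  have hsqrt0 : 0 < Real.sqrt n := Real.sqrt_pos.mpr hn0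
  have hsq : Real.exp (3/(10*δ)) < Real.sqrt n := by
    have h1 : Real.log (Real.sqrt n) = Real.log n / 2 := Real.log_sqrt hn0.le
    have h2 : 3/(10*δ) < Real.log (Real.sqrt n) := by
      rw [h1, lt_div_iff₀ (by norm_num : (0:ℝ) < 2), div_mul_eq_mul_div, div_lt_iff₀ (by positivity)]
      rw [div_lt_iff₀ (by positivity)] at hlogn'
      nlinarith
    calc Real.exp (3/(10*δ)) < Real.exp (Real.log (Real.sqrt n)) := Real.exp_lt_exp.mpr h2
      _ = Real.sqrt n := Real.exp_log hsqrt0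
  have he1 : (2.7182818283:ℝ) < Real.exp 1 := Real.exp_one_gt_d9
  have hsq2 : (0.81548:ℝ)/δ < Real.sqrt n := by
    have h1 := exp_ge_e_mul (3/(10*δ))
    have h2 : (0.81548:ℝ)/δ ≤ Real.exp 1 * (3/(10*δ)) := by
      rw [div_le_iff₀ hδ0]
      have : Real.exp 1 * (3/(10*δ)) * δ = Real.exp 1 * (3/10) := by field_simp
      rw [this]; nlinarith
    linarith
  -- bounds on LHS
  have hL1 : 2 / Real.sqrt n < 2*δ/0.81548 := by
    rw [div_lt_div_iff₀ hsqrt0 (by norm_num)]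
    have := hsq2
    rw [div_lt_iff₀ hδ0] at this
    nlinarith
  have hsqrt7 : (2.645:ℝ) ≤ Real.sqrt n := by
    have : ((2.645:ℝ))^2 ≤ (n:ℝ) := by nlinarith
    nlinarith [Real.sq_sqrt hn0.le, Real.sqrt_nonneg (n:ℝ), abs_le_abs (le_refl (1:ℝ))]
  have hL2 : 1 / (n:ℝ) < δ/2.156 := by
    have hn : (2.156:ℝ)/δ < (n:ℝ) := by
      have h1 : Real.sqrt n * Real.sqrt n = (n:ℝ) := Real.mul_self_sqrt hn0.le
      rw [div_lt_iff₀ hδ0] at hsq2 ⊢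
      nlinarith
    rw [div_lt_div_iff₀ hn0 (by norm_num)]
    rw [div_lt_iff₀ hδ0] at hn
    nlinarith
  have hR : (1.6931471803:ℝ) < Real.log (2/δ) := by
    have h6 : (6:ℝ) ≤ 2/δ := by
      rw [le_div_iff₀ hδ0]; linarith
    have hlog6 : Real.log 6 ≤ Real.log (2/δ) := Real.log_le_log (by norm_num) h6
    have he : Real.exp 1 ≤ 3 := by linarith [Real.exp_one_lt_d9]
    have hlog3 : (1:ℝ) ≤ Real.log 3 := by
      rw [Real.le_log_iff_exp_le (by norm_num : (0:ℝ) < 3)]; simpa using he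
    have hlog2 := Real.log_two_gt_d9
    have h62 : Real.log 6 = Real.log 2 + Real.log 3 := by
      rw [← Real.log_mul (by norm_num) (by norm_num)]; norm_num
    linarith
  have hc : (2/0.81548 + 1/2.156 : ℝ) < 2*1.6931471803 := by norm_num
  have hmul := mul_lt_mul_of_pos_left hR hδ0
  have hmul2 := mul_lt_mul_of_pos_left hc hδ0
  have e1 : 2*δ/0.81548 = δ * (2/0.81548) := by ring
  have e2 : δ/2.156 = δ * (1/2.156) := by ring
  nlinarith [hL1, hL2, hmul, hmul2]

lemma card_sub_lower (A : Finset ℤ) (hA : A.Nonempty) :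
    A.card + A.card ≤ (A - A).card + 1 := by
  classical
  set a0 := A.min' hA with ha0
  set u := A.image (fun a => a - a0) with hu
  set v := A.image (fun a => a0 - a) with hv
  have hcu : u.card = A.card := Finset.card_image_of_injective _ (fun a b h => by omega)
  have hcv : v.card = A.card := Finset.card_image_of_injective _ (fun a b h => by omega)
  have hsub : u ∪ v ⊆ A - A := by
    intro x hx
    rcases Finset.mem_union.mp hx with h | h
    · obtain ⟨a, ha, rfl⟩ := Finset.mem_image.mp h
      exact Finset.sub_mem_sub ha (A.min'_mem hA)
    · obtain ⟨a, ha, rfl⟩ := Finset.mem_image.mp h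
      exact Finset.sub_mem_sub (A.min'_mem hA) ha
  have hint : u ∩ v ⊆ {0} := by
    intro x hx
    obtain ⟨h1, h2⟩ := Finset.mem_inter.mp hx
    obtain ⟨a, ha, rfl⟩ := Finset.mem_image.mp h1
    obtain ⟨b, hb, hba⟩ := Finset.mem_image.mp h2
    have h3 := A.min'_le a ha
    have h4 := A.min'_le b hb
    simp only [Finset.mem_singleton]
    omega
  have h5 : (u ∩ v).card ≤ 1 := by
    simpa using Finset.card_le_card hint
  have h6 := Finset.card_union_add_card_inter u v
  have h7 : (u ∪ v).card ≤ (A - A).card := Finset.card_le_card hsub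
  omega

lemma wsum (m : ℤ) (hm : 1 ≤ m) :
    ∑ d ∈ (Finset.Icc (1-m) (m-1)).erase 0, (m - |d|).toNat
      = (m-1).toNat * m.toNat := by
  have hsplit : (Finset.Icc (1-m) (m-1)).erase 0
      = Finset.Icc (1-m) (-1) ∪ Finset.Icc 1 (m-1) := by
    ext d
    simp only [Finset.mem_erase, Finset.mem_Icc, Finset.mem_union]
    omega
  have hdisj : Disjoint (Finset.Icc (1-m) (-1)) (Finset.Icc (1:ℤ) (m-1)) := by
    rw [Finset.disjoint_left]
    intro a h1 h2
    simp only [Finset.mem_Icc] at h1 h2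
    omega
  rw [hsplit, Finset.sum_union hdisj]
  have hneg : ∑ d ∈ Finset.Icc (1-m) (-1), (m - |d|).toNat
      = ∑ d ∈ Finset.Icc (1:ℤ) (m-1), (m - |d|).toNat := by
    refine Finset.sum_nbij' (fun d => -d) (fun d => -d) ?_ ?_ ?_ ?_ ?_
    · intro a ha; simp only [Finset.mem_Icc] at *; omega
    · intro a ha; simp only [Finset.mem_Icc] at *; omega
    · intro a _; ring
    · intro a _; ring
    · intro a _; rw [abs_neg]
  have hrefl : ∑ d ∈ Finset.Icc (1:ℤ) (m-1), (m - |d|).toNat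
      = ∑ d ∈ Finset.Icc (1:ℤ) (m-1), d.toNat := by
    refine Finset.sum_nbij' (fun d => m - d) (fun d => m - d) ?_ ?_ ?_ ?_ ?_
    · intro a ha; simp only [Finset.mem_Icc] at *; omega
    · intro a ha; simp only [Finset.mem_Icc] at *; omega
    · intro a _; ring
    · intro a _; ring
    · intro a ha
      simp only [Finset.mem_Icc] at ha
      rw [abs_of_nonneg (by omega : (0:ℤ) ≤ a)]
  rw [hneg]
  nth_rewrite 2 [hrefl]
  rw [← Finset.sum_add_distrib]
  have hconst : ∑ d ∈ Finset.Icc (1:ℤ) (m-1), ((m - |d|).toNat + d.toNat)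
      = ∑ _d ∈ Finset.Icc (1:ℤ) (m-1), m.toNat := by
    refine Finset.sum_congr rfl ?_
    intro d hd
    simp only [Finset.mem_Icc] at hd
    rw [abs_of_nonneg (by omega : (0:ℤ) ≤ d)]
    omega
  rw [hconst, Finset.sum_const, Int.card_Icc, smul_eq_mul]
  congr 1
  omega

lemma count_lemma (A : Finset ℤ) (N m : ℤ) (hN : 1 ≤ N) (hm : 1 ≤ m)
    (hsub : A ⊆ Finset.Icc 1 N) (B : ℝ) (hB0 : 0 ≤ B)
    (hcon : ∀ d : ℤ, d ≠ 0 → ((A ∩ A.image (· + d)).card : ℝ) ≤ B) :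
    ((A.card : ℝ) * m) ^ 2 ≤ ((N : ℝ) + m - 1) * (A.card * m + B * ((m:ℝ) * ((m:ℝ) - 1))) := by
  classical
  set S := Finset.Icc (1:ℤ) (N + m - 1) with hS
  set f : ℤ → ℕ := fun x => (A ∩ Finset.Icc (x - m + 1) x).card with hf
  have hmemA : ∀ a ∈ A, 1 ≤ a ∧ a ≤ N := fun a ha => Finset.mem_Icc.mp (hsub ha)
  have hwin : ∀ a ∈ A,
      (S.filter (fun x => a ∈ Finset.Icc (x - m + 1) x)) = Finset.Icc a (a + m - 1) := by
    intro a ha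
    obtain ⟨h1, h2⟩ := hmemA a ha
    ext x
    simp only [Finset.mem_filter, Finset.mem_Icc, hS]
    omega
  have hfx : ∀ x, f x = ∑ a ∈ A, if a ∈ Finset.Icc (x - m + 1) x then 1 else 0 := by
    intro x
    rw [hf]
    simp only
    rw [← Finset.filter_mem_eq_inter, Finset.card_filter]
  have sum1 : ∑ x ∈ S, f x = A.card * m.toNat := by
    calc ∑ x ∈ S, f x
        = ∑ x ∈ S, ∑ a ∈ A, (if a ∈ Finset.Icc (x - m + 1) x then 1 else 0) :=
          Finset.sum_congr rfl fun x _ => hfx x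
      _ = ∑ a ∈ A, ∑ x ∈ S, (if a ∈ Finset.Icc (x - m + 1) x then 1 else 0) := Finset.sum_comm
      _ = ∑ a ∈ A, (S.filter (fun x => a ∈ Finset.Icc (x - m + 1) x)).card :=
          Finset.sum_congr rfl fun a _ => (Finset.card_filter _ _).symm
      _ = ∑ _a ∈ A, m.toNat := by
          refine Finset.sum_congr rfl fun a ha => ?_
          rw [hwin a ha, Int.card_Icc]
          congr 1
          omega
      _ = A.card * m.toNat := by rw [Finset.sum_const, smul_eq_mul]
  have hpair : ∀ a ∈ A, ∀ b ∈ A,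
      (S.filter (fun x => a ∈ Finset.Icc (x - m + 1) x ∧ b ∈ Finset.Icc (x - m + 1) x)).card
        = (m - |a - b|).toNat := by
    intro a ha b hb
    obtain ⟨ha1, ha2⟩ := hmemA a ha
    obtain ⟨hb1, hb2⟩ := hmemA b hb
    rcases le_total a b with hab | hab
    · have he : (S.filter (fun x => a ∈ Finset.Icc (x - m + 1) x ∧ b ∈ Finset.Icc (x - m + 1) x))
          = Finset.Icc b (a + m - 1) := by
        ext x
        simp only [Finset.mem_filter, Finset.mem_Icc, hS]
        omega
      rw [he, Int.card_Icc, abs_of_nonpos (by omega : a - b ≤ 0)]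
      congr 1
      omega
    · have he : (S.filter (fun x => a ∈ Finset.Icc (x - m + 1) x ∧ b ∈ Finset.Icc (x - m + 1) x))
          = Finset.Icc a (b + m - 1) := by
        ext x
        simp only [Finset.mem_filter, Finset.mem_Icc, hS]
        omega
      rw [he, Int.card_Icc, abs_of_nonneg (by omega : (0:ℤ) ≤ a - b)]
      congr 1
      omega
  have sum2 : ∑ x ∈ S, f x * f x = ∑ p ∈ A ×ˢ A, (m - |p.1 - p.2|).toNat := by
    have e1 : ∀ x, f x * f x = ∑ p ∈ A ×ˢ A,
        (if p.1 ∈ Finset.Icc (x - m + 1) x ∧ p.2 ∈ Finset.Icc (x - m + 1) x then 1 else 0) := by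
      intro x
      rw [hfx x, Finset.sum_mul_sum, Finset.sum_product]
      refine Finset.sum_congr rfl fun a _ => Finset.sum_congr rfl fun b _ => ?_
      by_cases h1 : a ∈ Finset.Icc (x - m + 1) x <;>
        by_cases h2 : b ∈ Finset.Icc (x - m + 1) x <;> simp [h1, h2]
    calc ∑ x ∈ S, f x * f x
        = ∑ x ∈ S, ∑ p ∈ A ×ˢ A,
            (if p.1 ∈ Finset.Icc (x - m + 1) x ∧ p.2 ∈ Finset.Icc (x - m + 1) x then 1 else 0) :=
          Finset.sum_congr rfl fun x _ => e1 x
      _ = ∑ p ∈ A ×ˢ A, ∑ x ∈ S,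
            (if p.1 ∈ Finset.Icc (x - m + 1) x ∧ p.2 ∈ Finset.Icc (x - m + 1) x then 1 else 0) :=
          Finset.sum_comm
      _ = ∑ p ∈ A ×ˢ A, (m - |p.1 - p.2|).toNat := by
          refine Finset.sum_congr rfl fun p hp => ?_
          obtain ⟨hp1, hp2⟩ := Finset.mem_product.mp hp
          rw [← Finset.card_filter]
          exact hpair p.1 hp1 p.2 hp2
  have split : ∑ p ∈ A ×ˢ A, (m - |p.1 - p.2|).toNat
      = A.card * m.toNat + ∑ p ∈ A.offDiag, (m - |p.1 - p.2|).toNat := by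
    rw [← Finset.diag_union_offDiag A, Finset.sum_union (Finset.disjoint_diag_offDiag A)]
    congr 1
    rw [Finset.sum_diag]
    simp only [sub_self, abs_zero, sub_zero]
    rw [Finset.sum_const, smul_eq_mul]
  -- off-diagonal bound
  have hsum_t : ∀ (t : Finset ℤ), t = (A - A).erase 0 →
      ∑ d ∈ t, (m - |d|).toNat ≤ (m-1).toNat * m.toNat := by
    intro t ht
    rw [← wsum m hm]
    set W := (Finset.Icc (1-m) (m-1)).erase 0 with hW
    have h1 : ∑ d ∈ t.filter (fun d => d ∈ W), (m - |d|).toNat = ∑ d ∈ t, (m - |d|).toNat := by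
      refine Finset.sum_subset (Finset.filter_subset _ _) ?_
      intro d hd hnd
      simp only [Finset.mem_filter, hd, true_and] at hnd
      simp only [hW, Finset.mem_erase, Finset.mem_Icc] at hnd
      have hd0 : d ≠ 0 := by
        rw [ht] at hd
        exact (Finset.mem_erase.mp hd).1
      rcases le_total 0 d with h | h
      · rw [abs_of_nonneg h]; omega
      · rw [abs_of_nonpos h]; omega
    rw [← h1]
    exact Finset.sum_le_sum_of_subset (fun d hd => (Finset.mem_filter.mp hd).2)
  have cm : ((m.toNat : ℕ) : ℝ) = (m : ℝ) := by
    rw [show ((m.toNat : ℕ) : ℝ) = ((m.toNat : ℤ) : ℝ) by push_cast; ring,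
      Int.toNat_of_nonneg (by omega : (0:ℤ) ≤ m)]
  have c1 : (((m-1).toNat : ℕ) : ℝ) = (m:ℝ) - 1 := by
    rw [show (((m-1).toNat : ℕ) : ℝ) = (((m-1).toNat : ℤ) : ℝ) by push_cast; ring,
      Int.toNat_of_nonneg (by omega : (0:ℤ) ≤ m - 1)]
    push_cast
    ring
  have hoff : (∑ p ∈ A.offDiag, ((m - |p.1 - p.2|).toNat : ℝ)) ≤ B * ((m:ℝ) * ((m:ℝ) - 1)) := by
    set t := (A - A).erase 0 with ht
    have hmaps : ∀ p ∈ A.offDiag, p.1 - p.2 ∈ t := by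
      intro p hp
      obtain ⟨h1, h2, h3⟩ := Finset.mem_offDiag.mp hp
      exact Finset.mem_erase.mpr ⟨sub_ne_zero.mpr h3, Finset.sub_mem_sub h1 h2⟩
    rw [← Finset.sum_fiberwise_of_maps_to hmaps]
    have hfib : ∀ d ∈ t, ∑ p ∈ A.offDiag.filter (fun p => p.1 - p.2 = d),
        ((m - |p.1 - p.2|).toNat : ℝ)
        = ((m - |d|).toNat : ℝ) * ((A ∩ A.image (· + d)).card : ℝ) := by
      intro d hd
      have hd0 : d ≠ 0 := (Finset.mem_erase.mp hd).1
      have hcard : (A.offDiag.filter (fun p => p.1 - p.2 = d)).card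
          = (A ∩ A.image (· + d)).card := by
        refine Finset.card_nbij' (fun p => p.1) (fun a => (a, a - d)) ?_ ?_ ?_ ?_
        · intro p hp
          simp only [Finset.mem_coe, Finset.mem_filter, Finset.mem_offDiag] at hp
          obtain ⟨⟨h1, h2, h3⟩, h4⟩ := hp
          exact Finset.mem_inter.mpr ⟨h1, Finset.mem_image.mpr ⟨p.2, h2, by show p.2 + d = p.1; omega⟩⟩
        · intro a ha
          obtain ⟨h1, h2⟩ := Finset.mem_inter.mp ha
          obtain ⟨b, hb, hba⟩ := Finset.mem_image.mp h2
          simp only [Finset.mem_coe, Finset.mem_filter, Finset.mem_offDiag]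
          have hab : a - d = b := by omega
          refine ⟨⟨h1, by rwa [hab], ?_⟩, by ring⟩
          intro hcontra
          apply hd0
          omega
        · intro p hp
          simp only [Finset.mem_coe, Finset.mem_filter] at hp
          have h4 := hp.2
          dsimp only
          have h5 : p.1 - d = p.2 := by omega
          rw [h5]
        · intro a _
          simp
      have hconst : ∑ p ∈ A.offDiag.filter (fun p => p.1 - p.2 = d),
          ((m - |p.1 - p.2|).toNat : ℝ)
          = ∑ _p ∈ A.offDiag.filter (fun p => p.1 - p.2 = d), ((m - |d|).toNat : ℝ) := by
        refine Finset.sum_congr rfl fun p hp => ?_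
        rw [(Finset.mem_filter.mp hp).2]
      rw [hconst, Finset.sum_const, nsmul_eq_mul, hcard, mul_comm]
    calc ∑ d ∈ t, ∑ p ∈ A.offDiag.filter (fun p => p.1 - p.2 = d), ((m - |p.1 - p.2|).toNat : ℝ)
        = ∑ d ∈ t, ((m - |d|).toNat : ℝ) * ((A ∩ A.image (· + d)).card : ℝ) :=
          Finset.sum_congr rfl hfib
      _ ≤ ∑ d ∈ t, ((m - |d|).toNat : ℝ) * B := by
          refine Finset.sum_le_sum fun d hd => ?_
          exact mul_le_mul_of_nonneg_left (hcon d (Finset.mem_erase.mp hd).1) (by positivity)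
      _ = (∑ d ∈ t, ((m - |d|).toNat : ℝ)) * B := by rw [Finset.sum_mul]
      _ ≤ (((m:ℝ) - 1) * m) * B := by
          refine mul_le_mul_of_nonneg_right ?_ hB0
          have h2 := hsum_t t ht
          have h3 : ((∑ d ∈ t, (m - |d|).toNat : ℕ) : ℝ) ≤ (((m-1).toNat * m.toNat : ℕ) : ℝ) := by
            exact_mod_cast h2
          rw [Nat.cast_sum] at h3
          refine h3.trans (le_of_eq ?_)
          rw [Nat.cast_mul, c1, cm]
      _ = B * ((m:ℝ) * ((m:ℝ) - 1)) := by ring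
  -- Cauchy-Schwarz and assembly
  have hScard : ((S.card : ℕ) : ℝ) = (N:ℝ) + m - 1 := by
    rw [hS, Int.card_Icc]
    have : (N + m - 1 + 1 - 1) = N + m - 1 := by ring
    rw [this]
    have h0 : (0:ℤ) ≤ N + m - 1 := by omega
    rw [show ((N + m - 1).toNat : ℝ) = (((N + m - 1).toNat : ℤ) : ℝ) by push_cast; ring,
      Int.toNat_of_nonneg h0]
    push_cast
    ring
  have cs := Finset.sum_mul_sq_le_sq_mul_sq S (fun _ => (1:ℝ)) (fun x => (f x : ℝ))
  simp only [one_mul, one_pow] at cs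
  have hsum1R : ∑ x ∈ S, (f x : ℝ) = (A.card : ℝ) * m := by
    rw [← Nat.cast_sum, sum1, Nat.cast_mul, cm]
  have hsum2R : ∑ x ∈ S, (f x : ℝ) ^ 2 ≤ (A.card : ℝ) * m + B * ((m:ℝ) * ((m:ℝ) - 1)) := by
    have e : ∑ x ∈ S, (f x : ℝ) ^ 2 = ((∑ x ∈ S, f x * f x : ℕ) : ℝ) := by
      rw [Nat.cast_sum]
      refine Finset.sum_congr rfl fun x _ => ?_
      push_cast
      ring
    rw [e, sum2, split]
    push_cast
    rw [cm]
    linarith [hoff]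
  calc ((A.card : ℝ) * m) ^ 2 = (∑ x ∈ S, (f x : ℝ)) ^ 2 := by rw [hsum1R]
    _ ≤ (∑ x ∈ S, (1:ℝ) ^ 2) * ∑ x ∈ S, (f x : ℝ) ^ 2 := by
        have cs2 := Finset.sum_mul_sq_le_sq_mul_sq S (fun _ => (1:ℝ)) (fun x => (f x : ℝ))
        simpa using cs2
    _ = ((S.card : ℕ) : ℝ) * ∑ x ∈ S, (f x : ℝ) ^ 2 := by simp
    _ ≤ ((N:ℝ) + m - 1) * ((A.card : ℝ) * m + B * ((m:ℝ) * ((m:ℝ) - 1))) := by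
        rw [hScard]
        refine mul_le_mul_of_nonneg_left hsum2R ?_
        have : (1:ℝ) ≤ (N:ℝ) := by exact_mod_cast hN
        have : (1:ℝ) ≤ (m:ℝ) := by exact_mod_cast hm
        linarith

theorem stmt14 (L : ℝ) (hL : 1 < L) (A : Finset ℤ) (hA : A.Nonempty)
    (hAsub : A ⊆ Finset.Icc 1 ⌊L⌋) (δ : ℝ) (hδ0 : 0 < δ) (hδ1 : δ < 1 / 3)
    (hsize : ((A - A).card : ℝ) < (A.card : ℝ) ^ (1 + δ)) :
    ∃ d : ℤ, d ≠ 0 ∧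
      ((A ∩ A.image (· + d)).card : ℝ) >
        (A.card : ℝ) ^ 2 / L * (1 - 2 * δ * Real.log (2 / δ)) := by
  by_contra hcon
  push_neg at hcon
  set n := A.card with hn
  set N : ℤ := ⌊L⌋ with hN
  have hL0 : (0:ℝ) < L := lt_trans one_pos hL
  have hN1 : 1 ≤ N := by
    rw [hN]
    exact Int.le_floor.mpr (by exact_mod_cast hL.le)
  have hNL : (N:ℝ) ≤ L := Int.floor_le L
  have hnN : (n:ℤ) ≤ N := by
    have h1 := Finset.card_le_card hAsub
    rw [Int.card_Icc] at h1
    omega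
  have hn1 : 1 ≤ n := hA.card_pos
  have hAAlow := card_sub_lower A hA
  have hn2 : 2 ≤ n := by
    by_contra h
    have hne : n = 1 := by omega
    rw [hne] at hsize
    have hAA1 : 1 ≤ (A - A).card := Finset.card_pos.mpr (hA.sub hA)
    have h2 : (1:ℝ) ≤ ((A - A).card : ℝ) := by exact_mod_cast hAA1
    rw [Nat.cast_one, Real.one_rpow] at hsize
    linarith
  have hn0 : (0:ℝ) < (n:ℝ) := by positivity
  have h2n : 2*(n:ℝ) - 1 < (n:ℝ) ^ (1+δ) := by
    have h1 : 2*n - 1 ≤ (A - A).card := by omega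
    have h2 : ((2*n - 1 : ℕ) : ℝ) ≤ ((A - A).card : ℝ) := by exact_mod_cast h1
    have h3 : ((2*n - 1 : ℕ) : ℝ) = 2*(n:ℝ) - 1 := by
      have : 1 ≤ 2*n := by omega
      push_cast [this]
      ring
    linarith
  have hn7 : 7 ≤ n := by
    by_contra hlt
    push_neg at hlt
    have hb : (1:ℝ) ≤ (n:ℝ) := by exact_mod_cast hn1
    have h43 : (n:ℝ) ^ (1+δ) ≤ (n:ℝ) ^ ((4:ℝ)/3) :=
      Real.rpow_le_rpow_of_exponent_le hb (by linarith)
    have hcube : ((n:ℝ) ^ ((4:ℝ)/3)) ^ (3:ℕ) = (n:ℝ) ^ (4:ℕ) := by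
      rw [← Real.rpow_natCast ((n:ℝ) ^ ((4:ℝ)/3)) 3, ← Real.rpow_mul (by positivity)]
      norm_num
    have h0 : (0:ℝ) < 2*(n:ℝ) - 1 := by
      have : (2:ℝ) ≤ (n:ℝ) := by exact_mod_cast hn2
      linarith
    have hfin : (2*(n:ℝ) - 1) ^ (3:ℕ) < (n:ℝ) ^ (4:ℕ) := by
      calc (2*(n:ℝ) - 1) ^ (3:ℕ) < ((n:ℝ) ^ ((4:ℝ)/3)) ^ (3:ℕ) := by
            have hlt2 : 2*(n:ℝ) - 1 < (n:ℝ) ^ ((4:ℝ)/3) := lt_of_lt_of_le h2n h43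
            exact pow_lt_pow_left₀ hlt2 h0.le (by norm_num)
        _ = (n:ℝ) ^ (4:ℕ) := hcube
    interval_cases n <;> norm_num at hfin
  have hn7R : (7:ℝ) ≤ (n:ℝ) := by exact_mod_cast hn7
  have hnd : (13:ℝ)/7 < (n:ℝ) ^ δ := by
    have h1 : (n:ℝ) ^ (1+δ) = (n:ℝ) * (n:ℝ) ^ δ := by
      rw [Real.rpow_add hn0, Real.rpow_one]
    have h2 : 2*(n:ℝ) - 1 < (n:ℝ) * (n:ℝ) ^ δ := by rw [← h1]; exact h2n
    have h3 : (13:ℝ)/7 * (n:ℝ) ≤ 2*(n:ℝ) - 1 := by nlinarith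
    nlinarith
  have hkey := key_numeric n δ hδ0 hδ1 hn7 hnd
  set E := 2 * δ * Real.log (2/δ) with hE
  set B := (n:ℝ)^2 / L * (1 - E) with hB
  have hB0 : 0 ≤ B := le_trans (Nat.cast_nonneg _) (hcon 1 one_ne_zero)
  set s := Real.sqrt (n:ℝ) with hs
  have hs0 : 0 < s := Real.sqrt_pos.mpr hn0
  have hss : s * s = (n:ℝ) := Real.mul_self_sqrt hn0.le
  set m : ℤ := ⌊(N:ℝ)/s⌋ + 1 with hm
  have hm1 : 1 ≤ m := by
    have h0 : 0 ≤ ⌊(N:ℝ)/s⌋ := Int.floor_nonneg.mpr (by positivity)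
    omega
  have hmlow : (N:ℝ)/s < (m:ℝ) := by
    rw [hm]
    push_cast
    exact Int.lt_floor_add_one _
  have hmup : (m:ℝ) ≤ (N:ℝ)/s + 1 := by
    rw [hm]
    push_cast
    linarith [Int.floor_le ((N:ℝ)/s)]
  have hcount := count_lemma A N m hN1 hm1 hAsub B hB0 hcon
  -- abbreviations
  have hmr0 : (0:ℝ) < (m:ℝ) := by exact_mod_cast hm1
  have hmr1 : (1:ℝ) ≤ (m:ℝ) := by exact_mod_cast hm1
  have hNr0 : (0:ℝ) < (N:ℝ) := by exact_mod_cast hN1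
  have hxN : (n:ℝ) ≤ (N:ℝ) := by exact_mod_cast hnN
  have step1 : (n:ℝ)^2*(m:ℝ)^2 ≤ ((N:ℝ)+(m:ℝ))*((n:ℝ)*(m:ℝ) + B*(m:ℝ)^2) := by
    have h1 : (0:ℝ) ≤ (n:ℝ)*(m:ℝ) := by positivity
    have h2 : (0:ℝ) ≤ B*(m:ℝ)*((m:ℝ)-1) := by
      apply mul_nonneg (mul_nonneg hB0 hmr0.le)
      linarith
    have h3 : (0:ℝ) ≤ ((N:ℝ)+(m:ℝ))*(B*(m:ℝ)) := by
      apply mul_nonneg (by linarith) (mul_nonneg hB0 hmr0.le)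
    nlinarith [hcount]
  have step2 : (n:ℝ)^2*(m:ℝ) ≤ ((N:ℝ)+(m:ℝ))*((n:ℝ) + B*(m:ℝ)) := by
    refine le_of_mul_le_mul_right ?_ hmr0
    calc ((n:ℝ)^2*(m:ℝ))*(m:ℝ) = (n:ℝ)^2*(m:ℝ)^2 := by ring
      _ ≤ ((N:ℝ)+(m:ℝ))*((n:ℝ)*(m:ℝ) + B*(m:ℝ)^2) := step1
      _ = (((N:ℝ)+(m:ℝ))*((n:ℝ) + B*(m:ℝ)))*(m:ℝ) := by ring
  have d1 : (n:ℝ)^2/((N:ℝ)+(m:ℝ)) - (n:ℝ)/(m:ℝ) ≤ B := by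
    have hpos : (0:ℝ) < (N:ℝ)+(m:ℝ) := by linarith
    rw [div_sub_div _ _ (ne_of_gt hpos) (ne_of_gt hmr0), div_le_iff₀ (by positivity)]
    nlinarith [step2]
  have d2 : (n:ℝ)^2/(N:ℝ) - (n:ℝ)^2*(m:ℝ)/(N:ℝ)^2 ≤ (n:ℝ)^2/((N:ℝ)+(m:ℝ)) := by
    have hpos : (0:ℝ) < (N:ℝ)+(m:ℝ) := by linarith
    have key : (n:ℝ)^2/((N:ℝ)+(m:ℝ)) - ((n:ℝ)^2/(N:ℝ) - (n:ℝ)^2*(m:ℝ)/(N:ℝ)^2)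
        = (n:ℝ)^2*(m:ℝ)^2/((N:ℝ)^2*((N:ℝ)+(m:ℝ))) := by
      field_simp
      ring
    nlinarith [key, div_nonneg (by positivity : (0:ℝ) ≤ (n:ℝ)^2*(m:ℝ)^2)
      (by positivity : (0:ℝ) ≤ (N:ℝ)^2*((N:ℝ)+(m:ℝ)))]
  have d3 : (n:ℝ)^2*(m:ℝ)/(N:ℝ)^2
      ≤ (n:ℝ)^2/(N:ℝ)*(1/s) + (n:ℝ)^2/(N:ℝ)*(1/(n:ℝ)) := by
    have h1 : (n:ℝ)^2*(m:ℝ)/(N:ℝ)^2 ≤ (n:ℝ)^2*((N:ℝ)/s+1)/(N:ℝ)^2 := by gcongr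
    have h2 : (n:ℝ)^2*((N:ℝ)/s+1)/(N:ℝ)^2 = (n:ℝ)^2/(N:ℝ)*(1/s) + (n:ℝ)^2/(N:ℝ)^2 := by
      field_simp
    have h3 : (n:ℝ)^2/(N:ℝ)^2 ≤ (n:ℝ)^2/(N:ℝ)*(1/(n:ℝ)) := by
      have e1 : (n:ℝ)^2/(N:ℝ)*(1/(n:ℝ)) = (n:ℝ)^2/((N:ℝ)*(n:ℝ)) := by
        field_simp
      rw [e1]
      apply div_le_div_of_nonneg_left (by positivity) (by positivity)
      nlinarith
    linarith
  have d4 : (n:ℝ)/(m:ℝ) ≤ (n:ℝ)^2/(N:ℝ)*(1/s) := by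
    have a1 : (N:ℝ) < (m:ℝ)*s := by
      rw [div_lt_iff₀ hs0] at hmlow
      linarith
    have h1 : (n:ℝ)/(m:ℝ) ≤ (n:ℝ)*s/(N:ℝ) := by
      rw [div_le_div_iff₀ hmr0 hNr0]
      nlinarith
    have h2 : (n:ℝ)*s/(N:ℝ) = (n:ℝ)^2/(N:ℝ)*(1/s) := by
      field_simp
      linear_combination hss
    linarith [h1, le_of_eq h2]
  have d5 : (n:ℝ)^2/(N:ℝ)*(1 - 1/s - 1/s - 1/(n:ℝ)) ≤ B := by
    have e : (n:ℝ)^2/(N:ℝ)*(1 - 1/s - 1/s - 1/(n:ℝ))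
        = (n:ℝ)^2/(N:ℝ) - (n:ℝ)^2/(N:ℝ)*(1/s) - (n:ℝ)^2/(N:ℝ)*(1/s)
          - (n:ℝ)^2/(N:ℝ)*(1/(n:ℝ)) := by ring
    rw [e]
    linarith [d1, d2, d3, d4]
  have h1e : 0 ≤ 1 - E := by
    by_contra h
    push_neg at h
    have hx2L : (0:ℝ) < (n:ℝ)^2/L := by positivity
    have hneg : (n:ℝ)^2/L * (1 - E) < 0 := mul_neg_of_pos_of_neg hx2L (by linarith)
    rw [hB] at hB0
    linarith
  have d6 : B ≤ (n:ℝ)^2/(N:ℝ)*(1 - E) := by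
    rw [hB]
    apply mul_le_mul_of_nonneg_right _ h1e
    apply div_le_div_of_nonneg_left (by positivity) hNr0 hNL
  have hu : (0:ℝ) < (n:ℝ)^2/(N:ℝ) := by positivity
  have d7 : 1 - 1/s - 1/s - 1/(n:ℝ) ≤ 1 - E := by
    have := le_trans d5 d6
    exact le_of_mul_le_mul_left (by linarith [this]) hu
  have e2s : 2/s = 1/s + 1/s := by ring
  have hfin : E ≤ 1/s + 1/s + 1/(n:ℝ) := by linarith [d7]
  rw [e2s] at hkey
  linarith [hkey, hfin]
end

section
/- Let k ≥ 1 be an integer, G a finite abelian group, and D ⊆ G with 0 ∈ D = −D. If |G \ D| = τ|D| with 0 < τ ≤ min{1/2, 2/(k² − k + 2)}, then T_D^{(k)}(D) ≤ (1 − (1/4)k(k−1)τ)·|D|^k. -/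
open Finset Pointwise

set_option linter.unusedSectionVars false
set_option linter.unusedVariables false
set_option maxHeartbeats 1000000

section auxstmt15
variable {G : Type*} [AddCommGroup G] [Fintype G] [DecidableEq G]

lemma filter_sub_card_le0 (D : Finset G) (y : G) :
    (D.filter fun x => x - y ∉ D).card ≤ Fintype.card G - D.card := by
  have h : (D.filter fun x => x - y ∉ D).card ≤ ((univ : Finset G) \ D).card := by
    apply Finset.card_le_card_of_injOn (fun x => x - y)
    · intro x hx
      simp only [mem_coe, mem_filter] at hx
      simp [Finset.mem_sdiff, hx.2]
    · intro a _ b _ h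
      exact sub_left_injective h
  simpa [Finset.card_sdiff_of_subset (Finset.subset_univ D), Finset.card_univ] using h


lemma filter_sub_card_le0' (D : Finset G) (y : G) :
    (D.filter fun x => y - x ∉ D).card ≤ Fintype.card G - D.card := by
  have h : (D.filter fun x => y - x ∉ D).card ≤ ((univ : Finset G) \ D).card := by
    apply Finset.card_le_card_of_injOn (fun x => y - x)
    · intro x hx
      simp only [mem_coe, mem_filter] at hx
      simp [Finset.mem_sdiff, hx.2]
    · intro a _ b _ h
      exact sub_right_injective h
  simpa [Finset.card_sdiff_of_subset (Finset.subset_univ D), Finset.card_univ] using h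


lemma R_card' (D : Finset G) {k : ℕ} {i j : Fin k} (hij : i ≠ j) :
    (Fintype.piFinset fun l : Fin k => if l = i ∨ l = j then ({0} : Finset G) else D).card
      = D.card ^ (k - 2) := by
  rw [Fintype.card_piFinset]
  have h1 : ∀ l : Fin k, ((if l = i ∨ l = j then ({0} : Finset G) else D)).card
      = if l = i ∨ l = j then 1 else D.card := by
    intro l; split <;> simp
  simp only [h1]
  rw [Finset.prod_ite, Finset.prod_const, Finset.prod_const, one_pow, one_mul]
  congr 1
  have h2 : (univ : Finset (Fin k)).filter (fun l => l = i ∨ l = j) = {i, j} := by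
    ext l; simp [or_comm]
  have h3 : ({i, j} : Finset (Fin k)).card = 2 := by
    rw [Finset.card_insert_of_notMem (by simp [hij]), Finset.card_singleton]
  have h4 := Finset.card_filter_add_card_filter_not
    (s := (univ : Finset (Fin k))) (p := fun l => l = i ∨ l = j)
  rw [h2, h3] at h4
  simp only [Finset.card_univ, Fintype.card_fin] at h4
  omega


lemma count_two0 (D : Finset G) {k : ℕ} {i j : Fin k} (hij : i ≠ j)
    (Q : G → G → Prop) [∀ x y, Decidable (Q x y)] :
    ((Fintype.piFinset fun _ : Fin k => D).filter fun a => Q (a i) (a j)).card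
      = ((D ×ˢ D).filter fun p => Q p.1 p.2).card * D.card ^ (k - 2) := by
  have key : ((Fintype.piFinset fun _ : Fin k => D).filter fun a => Q (a i) (a j)).card
      = (((D ×ˢ D).filter fun p => Q p.1 p.2) ×ˢ
          (Fintype.piFinset fun l : Fin k => if l = i ∨ l = j then ({0} : Finset G) else D)).card := by
    apply Finset.card_nbij'
      (i := fun a => ((a i, a j), fun l => if l = i ∨ l = j then 0 else a l))
      (j := fun x l => if l = i then x.1.1 else if l = j then x.1.2 else x.2 l)
    · intro a ha
      simp only [Finset.mem_coe, Finset.mem_filter, Fintype.mem_piFinset] at ha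
      simp only [Finset.mem_coe, Finset.mem_product, Finset.mem_filter, Fintype.mem_piFinset]
      refine ⟨⟨⟨ha.1 i, ha.1 j⟩, ha.2⟩, ?_⟩
      intro l
      by_cases hl : l = i ∨ l = j
      · simp [hl]
      · rw [if_neg hl, if_neg hl]
        exact ha.1 l
    · rintro ⟨⟨x, y⟩, b⟩ hb
      simp only [Finset.mem_coe, Finset.mem_product, Finset.mem_filter, Fintype.mem_piFinset] at hb
      obtain ⟨⟨hxy, hQ⟩, hbmem⟩ := hb
      simp only [Finset.mem_coe, Finset.mem_filter, Fintype.mem_piFinset]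
      have hji : ¬ (j = i) := fun h => hij h.symm
      constructor
      · intro l
        by_cases hli : l = i
        · subst hli; simpa using hxy.1
        · by_cases hlj : l = j
          · subst hlj; simpa [hli] using hxy.2
          · have := hbmem l
            simp [hli, hlj] at this
            simpa [hli, hlj] using this
      · simpa [hji] using hQ
    · intro a ha
      funext l
      by_cases hli : l = i
      · simp [hli]
      · by_cases hlj : l = j
        · simp [hli, hlj, hij, Ne.symm hij]
        · simp [hli, hlj]
    · rintro ⟨⟨x, y⟩, b⟩ hb
      simp only [Finset.mem_coe, Finset.mem_product, Finset.mem_filter, Fintype.mem_piFinset] at hb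
      obtain ⟨⟨hxy, hQ⟩, hbmem⟩ := hb
      simp only [Prod.mk.injEq]
      refine ⟨⟨by simp, by simp [hij, Ne.symm hij]⟩, ?_⟩
      funext l
      by_cases hl : l = i ∨ l = j
      · have := hbmem l
        rw [if_pos hl] at this
        simp only [Finset.mem_singleton] at this
        simp [hl, this]
      · push_neg at hl
        simp [hl.1, hl.2]
  rw [key, Finset.card_product, R_card' D hij]


lemma inter_card_le0 (D : Finset G) {k : ℕ} {c1 o1 c2 o2 : Fin k}
    (h11 : c1 ≠ o1) (h22 : c2 ≠ o2) (h12 : c1 ≠ c2) (h1o2 : c1 ≠ o2) (h2o1 : c2 ≠ o1)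
    (Q1 Q2 : G → G → Prop) [∀ x y, Decidable (Q1 x y)] [∀ x y, Decidable (Q2 x y)]
    (M1 M2 : ℕ)
    (hQ1 : ∀ y, (D.filter fun x => Q1 x y).card ≤ M1)
    (hQ2 : ∀ y, (D.filter fun x => Q2 x y).card ≤ M2) :
    ((Fintype.piFinset fun _ : Fin k => D).filter
        fun a => Q1 (a c1) (a o1) ∧ Q2 (a c2) (a o2)).card
      ≤ M1 * M2 * D.card ^ (k - 2) := by
  set R := Fintype.piFinset fun l : Fin k => if l = c1 ∨ l = c2 then ({0} : Finset G) else D with hR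
  have hmap : ∀ a ∈ (Fintype.piFinset fun _ : Fin k => D).filter
      (fun a => Q1 (a c1) (a o1) ∧ Q2 (a c2) (a o2)),
      (fun l => if l = c1 ∨ l = c2 then (0 : G) else a l) ∈ R := by
    intro a ha
    simp only [Finset.mem_filter, Fintype.mem_piFinset] at ha
    rw [hR, Fintype.mem_piFinset]
    intro l
    by_cases hl : l = c1 ∨ l = c2
    · simp [hl]
    · rw [if_neg hl, if_neg hl]
      exact ha.1 l
  rw [Finset.card_eq_sum_card_fiberwise hmap]
  have hfiber : ∀ b ∈ R,
      (((Fintype.piFinset fun _ : Fin k => D).filter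
        (fun a => Q1 (a c1) (a o1) ∧ Q2 (a c2) (a o2))).filter
        (fun a => (fun l => if l = c1 ∨ l = c2 then (0 : G) else a l) = b)).card ≤ M1 * M2 := by
    intro b hb
    have hle : (((Fintype.piFinset fun _ : Fin k => D).filter
        (fun a => Q1 (a c1) (a o1) ∧ Q2 (a c2) (a o2))).filter
        (fun a => (fun l => if l = c1 ∨ l = c2 then (0 : G) else a l) = b)).card
        ≤ ((D.filter fun x => Q1 x (b o1)) ×ˢ (D.filter fun x => Q2 x (b o2))).card := by
      apply Finset.card_le_card_of_injOn (fun a => (a c1, a c2))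
      · intro a ha
        simp only [Finset.mem_coe, Finset.mem_filter, Fintype.mem_piFinset] at ha
        obtain ⟨⟨hmem, hq1, hq2⟩, hproj⟩ := ha
        have ho1 : a o1 = b o1 := by
          have := congrFun hproj o1
          simpa [Ne.symm h11, Ne.symm h2o1] using this
        have ho2 : a o2 = b o2 := by
          have := congrFun hproj o2
          simpa [Ne.symm h1o2, Ne.symm h22] using this
        simp only [Finset.mem_coe, Finset.mem_product, Finset.mem_filter]
        exact ⟨⟨hmem c1, ho1 ▸ hq1⟩, ⟨hmem c2, ho2 ▸ hq2⟩⟩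
      · intro a ha a' ha' heq
        simp only [Finset.mem_coe, Finset.mem_filter] at ha ha'
        obtain ⟨-, hproj⟩ := ha
        obtain ⟨-, hproj'⟩ := ha'
        simp only [Prod.mk.injEq] at heq
        funext l
        by_cases hl1 : l = c1
        · rw [hl1]; exact heq.1
        · by_cases hl2 : l = c2
          · rw [hl2]; exact heq.2
          · have e1 : (if l = c1 ∨ l = c2 then (0:G) else a l) = b l := congrFun hproj l
            have e2 : (if l = c1 ∨ l = c2 then (0:G) else a' l) = b l := congrFun hproj' l
            rw [if_neg (not_or.mpr ⟨hl1, hl2⟩)] at e1 e2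
            rw [e1, e2]
    calc _ ≤ ((D.filter fun x => Q1 x (b o1)) ×ˢ (D.filter fun x => Q2 x (b o2))).card := hle
      _ = (D.filter fun x => Q1 x (b o1)).card * (D.filter fun x => Q2 x (b o2)).card :=
          Finset.card_product _ _
      _ ≤ M1 * M2 := Nat.mul_le_mul (hQ1 _) (hQ2 _)
  calc ∑ b ∈ R, _ ≤ ∑ _b ∈ R, M1 * M2 := Finset.sum_le_sum hfiber
    _ = R.card * (M1 * M2) := by rw [Finset.sum_const, smul_eq_mul]
    _ = M1 * M2 * D.card ^ (k - 2) := by rw [R_card' D h12, Nat.mul_comm]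


lemma bad_pairs_lower0 (D : Finset G) :
    (Fintype.card G - D.card) * (D.card - (Fintype.card G - D.card))
      ≤ ((D ×ˢ D).filter fun p : G × G => p.1 - p.2 ∉ D).card := by
  set M := Fintype.card G - D.card with hM
  have hsd : ((univ : Finset G) \ D).card = M := by
    rw [Finset.card_sdiff_of_subset (Finset.subset_univ D), Finset.card_univ]
  have hfib : ∀ p ∈ (D ×ˢ D).filter (fun p : G × G => p.1 - p.2 ∉ D),
      p.1 - p.2 ∈ (univ : Finset G) \ D := by
    intro p hp
    simp only [Finset.mem_filter] at hp
    simp [Finset.mem_sdiff, hp.2]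
  rw [Finset.card_eq_sum_card_fiberwise hfib]
  have hper : ∀ c ∈ (univ : Finset G) \ D,
      D.card - M ≤ (((D ×ˢ D).filter fun p : G × G => p.1 - p.2 ∉ D).filter
        fun p => p.1 - p.2 = c).card := by
    intro c hc
    have hcD : c ∉ D := (Finset.mem_sdiff.mp hc).2
    have h1 : (D.filter fun y => y + c ∈ D).card
        ≤ (((D ×ˢ D).filter fun p : G × G => p.1 - p.2 ∉ D).filter
          fun p => p.1 - p.2 = c).card := by
      apply Finset.card_le_card_of_injOn (fun y => (y + c, y))
      · intro y hy
        simp only [Finset.mem_coe, Finset.mem_filter] at hy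
        have : y + c - y = c := by abel
        simp only [Finset.mem_coe, Finset.mem_filter, Finset.mem_product, this]
        exact ⟨⟨⟨hy.2, hy.1⟩, hcD⟩, trivial⟩
      · intro y _ y' _ h
        exact (Prod.mk.injEq _ _ _ _ ▸ h).2
    have h2 : (D.filter fun y => ¬ (y + c ∈ D)).card ≤ M := by
      have : (D.filter fun y => ¬ (y + c ∈ D)).card ≤ ((univ : Finset G) \ D).card := by
        apply Finset.card_le_card_of_injOn (fun y => y + c)
        · intro y hy
          simp only [Finset.mem_coe, Finset.mem_filter] at hy
          simp [Finset.mem_sdiff, hy.2]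
        · intro y _ y' _ h
          exact add_left_injective c h
      omega
    have h3 := Finset.card_filter_add_card_filter_not
      (s := D) (p := fun y => y + c ∈ D)
    omega
  calc M * (D.card - M) = ∑ _c ∈ (univ : Finset G) \ D, (D.card - M) := by
        rw [Finset.sum_const, hsd, smul_eq_mul]
    _ ≤ _ := Finset.sum_le_sum hper


lemma pairs_card0 (k : ℕ) :
    2 * ((univ : Finset (Fin k × Fin k)).filter fun p => p.1 < p.2).card + k = k * k := by
  have hswap : ((univ : Finset (Fin k × Fin k)).filter fun p => p.1 < p.2).card
      = ((univ : Finset (Fin k × Fin k)).filter fun p => p.2 < p.1).card := by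
    apply Finset.card_nbij' (i := Prod.swap) (j := Prod.swap)
    · intro p hp; simp only [Finset.mem_coe, Finset.mem_filter] at hp ⊢; exact ⟨Finset.mem_univ _, hp.2⟩
    · intro p hp; simp only [Finset.mem_coe, Finset.mem_filter] at hp ⊢; exact ⟨Finset.mem_univ _, hp.2⟩
    · intro p _; simp
    · intro p _; simp
  have hdiag : ((univ : Finset (Fin k × Fin k)).filter fun p => p.1 = p.2).card = k := by
    rw [show ((univ : Finset (Fin k × Fin k)).filter fun p => p.1 = p.2)
        = (univ : Finset (Fin k)).image (fun i => (i, i)) from by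
      ext p; simp only [Finset.mem_filter, Finset.mem_image, Finset.mem_univ, true_and]
      constructor
      · intro h; exact ⟨p.1, by simp [Prod.ext_iff, h]⟩
      · rintro ⟨i, rfl⟩; rfl]
    rw [Finset.card_image_of_injective _ (fun a b h => (Prod.mk.injEq _ _ _ _ ▸ h).1)]
    simp
  have hsplit := Finset.card_filter_add_card_filter_not
    (s := (univ : Finset (Fin k × Fin k))) (p := fun p => p.1 < p.2)
  have hneg : ((univ : Finset (Fin k × Fin k)).filter fun p => ¬ p.1 < p.2).card
      = ((univ : Finset (Fin k × Fin k)).filter fun p => p.2 < p.1).card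
        + ((univ : Finset (Fin k × Fin k)).filter fun p => p.1 = p.2).card := by
    rw [show ((univ : Finset (Fin k × Fin k)).filter fun p => ¬ p.1 < p.2)
        = ((univ : Finset (Fin k × Fin k)).filter fun p => p.2 < p.1)
          ∪ ((univ : Finset (Fin k × Fin k)).filter fun p => p.1 = p.2) from by
      ext p
      simp only [Finset.mem_filter, Finset.mem_union, Finset.mem_univ, true_and]
      constructor
      · intro h; rcases lt_or_eq_of_le (le_of_not_gt h) with h'|h'
        · exact Or.inl h'
        · exact Or.inr h'.symm
      · rintro (h|h)
        · exact not_lt_of_gt h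
        · rw [h]; exact lt_irrefl _]
    apply Finset.card_union_of_disjoint
    rw [Finset.disjoint_left]
    intro p hp hp'
    simp only [Finset.mem_filter] at hp hp'
    rw [hp'.2] at hp
    exact lt_irrefl _ hp.2
  have huniv : ((univ : Finset (Fin k × Fin k))).card = k * k := by
    simp [Finset.card_univ]
  omega


lemma bonf_point0 (t : ℕ) (c : ℝ) (h0 : 0 ≤ c) (h1 : 1 ≤ t → 1 ≤ c) :
    (t : ℝ) - (t : ℝ) * ((t : ℝ) - 1) / 2 ≤ c := by
  rcases Nat.eq_zero_or_pos t with h | h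
  · subst h; norm_num; exact h0
  · have hc := h1 h
    have : t = 1 ∨ 2 ≤ t := by omega
    rcases this with h' | h'
    · subst h'; norm_num; linarith
    · have : (2 : ℝ) ≤ (t : ℝ) := by exact_mod_cast h'
      nlinarith


lemma cross_bound0 (D : Finset G) {k : ℕ} {p q : Fin k × Fin k}
    (hp : p.1 < p.2) (hq : q.1 < q.2) (hpq : p ≠ q) :
    ((Fintype.piFinset fun _ : Fin k => D).filter
        fun a => a p.1 - a p.2 ∉ D ∧ a q.1 - a q.2 ∉ D).card
      ≤ (Fintype.card G - D.card) * (Fintype.card G - D.card) * D.card ^ (k - 2) := by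
  obtain ⟨i, j⟩ := p
  obtain ⟨i', j'⟩ := q
  simp only at hp hq ⊢
  have hfree1 : ¬(i = i' ∨ i = j') ∨ ¬(j = i' ∨ j = j') := by
    by_contra h
    push_neg at h
    obtain ⟨h1, h2⟩ := h
    rcases h1 with h1 | h1 <;> rcases h2 with h2 | h2
    · exact hp.ne (h1.trans h2.symm)
    · exact hpq (by rw [h1, h2])
    · have hji : j < i := by rw [h1, h2]; exact hq
      exact absurd hp (lt_asymm hji)
    · exact hp.ne (h1.trans h2.symm)
  have hfree2 : ¬(i' = i ∨ i' = j) ∨ ¬(j' = i ∨ j' = j) := by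
    by_contra h
    push_neg at h
    obtain ⟨h1, h2⟩ := h
    rcases h1 with h1 | h1 <;> rcases h2 with h2 | h2
    · exact hq.ne (h1.trans h2.symm)
    · exact hpq (by rw [h1, h2])
    · have hji : j < i := by rw [← h1, ← h2]; exact hq
      exact absurd hp (lt_asymm hji)
    · exact hq.ne (h1.trans h2.symm)
  rcases hfree1 with hf1 | hf1 <;> rcases hfree2 with hf2 | hf2 <;> push_neg at hf1 hf2
  · exact inter_card_le0 D hp.ne hq.ne hf1.1 hf1.2 hf2.2
      (fun x y => x - y ∉ D) (fun x y => x - y ∉ D) _ _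
      (fun y => filter_sub_card_le0 D y) (fun y => filter_sub_card_le0 D y)
  · exact inter_card_le0 D hp.ne hq.ne' hf1.2 hf1.1 hf2.2
      (fun x y => x - y ∉ D) (fun x y => y - x ∉ D) _ _
      (fun y => filter_sub_card_le0 D y) (fun y => filter_sub_card_le0' D y)
  · exact inter_card_le0 D hp.ne' hq.ne hf1.1 hf1.2 hf2.1
      (fun x y => y - x ∉ D) (fun x y => x - y ∉ D) _ _
      (fun y => filter_sub_card_le0' D y) (fun y => filter_sub_card_le0 D y)
  · exact inter_card_le0 D hp.ne' hq.ne' hf1.2 hf1.1 hf2.1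
      (fun x y => y - x ∉ D) (fun x y => y - x ∉ D) _ _
      (fun y => filter_sub_card_le0' D y) (fun y => filter_sub_card_le0' D y)


end auxstmt15

theorem stmt15 {G : Type*} [AddCommGroup G] [Fintype G] [DecidableEq G]
    (k : ℕ) (hk : 1 ≤ k) (D : Finset G) (hD0 : (0 : G) ∈ D) (hDsym : D = -D)
    (τ : ℝ) (hτ : ((Fintype.card G - D.card : ℕ) : ℝ) = τ * D.card)
    (hτ0 : 0 < τ) (hτup : τ ≤ min (1 / 2) (2 / ((k : ℝ) ^ 2 - k + 2))) :
    (T D D k : ℝ) ≤ (1 - 1 / 4 * k * (k - 1) * τ) * (D.card : ℝ) ^ k := by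
  classical
  have hd0 : 0 < D.card := Finset.card_pos.mpr ⟨0, hD0⟩
  have hdn : D.card ≤ Fintype.card G := by
    simpa [Finset.card_univ] using Finset.card_le_card (Finset.subset_univ D)
  set n := Fintype.card G with hn
  set d := D.card with hd
  set M := n - d with hMdef
  have hMR : (M : ℝ) = τ * d := hτ
  have hτh : τ ≤ 1 / 2 := hτup.trans (min_le_left _ _)
  have hdR : (0 : ℝ) < d := by exact_mod_cast hd0
  have hMd2 : (M : ℝ) ≤ (d : ℝ) / 2 := by rw [hMR]; nlinarith
  have hMled : M ≤ d := by
    have : (M : ℝ) ≤ (d : ℝ) := by linarith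
    exact_mod_cast this
  rcases eq_or_lt_of_le hk with hk1 | hk2
  · -- k = 1
    have hk1' : k = 1 := hk1.symm
    subst hk1'
    have hT1 : T D D 1 ≤ d ^ 1 := by
      refine le_trans (Finset.card_filter_le _ _) (le_of_eq ?_)
      simp [Fintype.card_piFinset, hd]
    have : (T D D 1 : ℝ) ≤ (d : ℝ) ^ 1 := by exact_mod_cast hT1
    calc (T D D 1 : ℝ) ≤ (d : ℝ) ^ 1 := this
      _ = (1 - 1 / 4 * 1 * ((1 : ℝ) - 1) * τ) * (d : ℝ) ^ 1 := by ring
      _ = (1 - 1 / 4 * (1 : ℕ) * (((1 : ℕ) : ℝ) - 1) * τ) * (d : ℝ) ^ 1 := by norm_num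
  · have hk2' : 2 ≤ k := hk2
    set A := Fintype.piFinset fun _ : Fin k => D with hA
    set P := (univ : Finset (Fin k × Fin k)).filter (fun p => p.1 < p.2) with hP
    set m := P.card with hm
    set B := ((D ×ˢ D).filter fun p : G × G => p.1 - p.2 ∉ D).card with hB
    have hAcard : A.card = d ^ k := by
      rw [hA, Fintype.card_piFinset]
      simp [hd]
    set t : (Fin k → G) → ℕ := fun a => (P.filter fun p => a p.1 - a p.2 ∉ D).card with ht
    -- identity 1
    have hS1 : ∑ a ∈ A, t a = ∑ p ∈ P, (A.filter fun a => a p.1 - a p.2 ∉ D).card := by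
      simp only [ht, Finset.card_filter]
      rw [Finset.sum_comm]
    -- identity 2
    have hS2 : ∑ a ∈ A, t a * t a
        = ∑ p ∈ P, ∑ q ∈ P,
            (A.filter fun a => a p.1 - a p.2 ∉ D ∧ a q.1 - a q.2 ∉ D).card := by
      have step1 : ∀ a, t a * t a
          = ∑ p ∈ P, ∑ q ∈ P,
              (if (a p.1 - a p.2 ∉ D) ∧ (a q.1 - a q.2 ∉ D) then 1 else 0) := by
        intro a
        rw [ht]
        simp only [Finset.card_filter]
        rw [Finset.sum_mul_sum]
        congr 1; funext p; congr 1; funext q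
        rw [ite_zero_mul_ite_zero, one_mul]
      simp only [step1]
      rw [Finset.sum_comm]
      refine Finset.sum_congr rfl fun p _ => ?_
      rw [Finset.sum_comm]
      refine Finset.sum_congr rfl fun q _ => ?_
      rw [Finset.card_filter]
    -- per-pair equality
    have hEp : ∀ p ∈ P, (A.filter fun a => a p.1 - a p.2 ∉ D).card = B * d ^ (k - 2) := by
      intro p hp
      have hplt : p.1 < p.2 := (Finset.mem_filter.mp hp).2
      exact count_two0 D hplt.ne (fun x y => x - y ∉ D)
    have hS1' : ∑ a ∈ A, t a = m * (B * d ^ (k - 2)) := by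
      rw [hS1, Finset.sum_congr rfl hEp, Finset.sum_const, smul_eq_mul]
    -- S2 bound
    have hS2' : ∑ a ∈ A, t a * t a
        ≤ m * (B * d ^ (k - 2)) + m * ((m - 1) * (M * M * d ^ (k - 2))) := by
      rw [hS2]
      have hper : ∀ p ∈ P,
          ∑ q ∈ P, (A.filter fun a => a p.1 - a p.2 ∉ D ∧ a q.1 - a q.2 ∉ D).card
            ≤ B * d ^ (k - 2) + (m - 1) * (M * M * d ^ (k - 2)) := by
        intro p hp
        rw [← Finset.add_sum_erase P _ hp]
        have hdiag : (A.filter fun a => a p.1 - a p.2 ∉ D ∧ a p.1 - a p.2 ∉ D).card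
            = B * d ^ (k - 2) := by
          rw [← hEp p hp]
          congr 1
          apply Finset.filter_congr
          intro a _
          simp [and_self]
        rw [hdiag]
        apply Nat.add_le_add_left
        have hoff : ∀ q ∈ P.erase p,
            (A.filter fun a => a p.1 - a p.2 ∉ D ∧ a q.1 - a q.2 ∉ D).card
              ≤ M * M * d ^ (k - 2) := by
          intro q hq
          have hq' : q ∈ P := Finset.mem_of_mem_erase hq
          have hqp : q ≠ p := Finset.ne_of_mem_erase hq
          exact cross_bound0 D (Finset.mem_filter.mp hp).2 (Finset.mem_filter.mp hq').2
            (fun h => hqp h.symm)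
        calc ∑ q ∈ P.erase p, _ ≤ ∑ _q ∈ P.erase p, M * M * d ^ (k - 2) :=
              Finset.sum_le_sum hoff
          _ = (m - 1) * (M * M * d ^ (k - 2)) := by
              rw [Finset.sum_const, smul_eq_mul, Finset.card_erase_of_mem hp, hm]
      calc ∑ p ∈ P, ∑ q ∈ P, _
          ≤ ∑ _p ∈ P, (B * d ^ (k - 2) + (m - 1) * (M * M * d ^ (k - 2))) :=
            Finset.sum_le_sum hper
        _ = m * (B * d ^ (k - 2) + (m - 1) * (M * M * d ^ (k - 2))) := by
            rw [Finset.sum_const, smul_eq_mul]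
        _ = m * (B * d ^ (k - 2)) + m * ((m - 1) * (M * M * d ^ (k - 2))) := by ring
    -- bad count
    have hbad : (A.filter fun a => ¬ ∀ i j, a i - a j ∈ D).card + T D D k = d ^ k := by
      have h := Finset.card_filter_add_card_filter_not
        (s := A) (p := fun a => ∀ i j, a i - a j ∈ D)
      have hT : T D D k = (A.filter fun a => ∀ i j, a i - a j ∈ D).card := rfl
      rw [hT, ← hAcard, ← h, Nat.add_comm]
    -- pointwise bound and summation
    have hpoint : ∀ a ∈ A,
        (t a : ℝ) - (t a : ℝ) * ((t a : ℝ) - 1) / 2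
          ≤ (if ¬ ∀ i j, a i - a j ∈ D then (1 : ℝ) else 0) := by
      intro a _
      apply bonf_point0
      · split <;> norm_num
      · intro h1
        have hbadex : ¬ ∀ i j, a i - a j ∈ D := by
          intro hgood
          have : t a = 0 := by
            rw [ht, Finset.card_eq_zero, Finset.filter_eq_empty_iff]
            intro p _
            simp [hgood p.1 p.2]
          rw [this] at h1
          exact absurd h1 (by norm_num)
        rw [if_pos hbadex]
    have hsum : ∑ a ∈ A, ((t a : ℝ) - (t a : ℝ) * ((t a : ℝ) - 1) / 2)
        ≤ ((A.filter fun a => ¬ ∀ i j, a i - a j ∈ D).card : ℝ) := by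
      rw [Finset.card_filter]
      push_cast
      exact Finset.sum_le_sum hpoint
    -- real versions
    set S1R : ℝ := ((∑ a ∈ A, t a : ℕ) : ℝ) with hS1Rdef
    set S2R : ℝ := ((∑ a ∈ A, t a * t a : ℕ) : ℝ) with hS2Rdef
    set dK2 : ℝ := (d : ℝ) ^ (k - 2) with hdK2def
    have hdk2 : dK2 * (d : ℝ) ^ 2 = (d : ℝ) ^ k := by
      rw [hdK2def, ← pow_add]
      congr 1
      exact Nat.sub_add_cancel hk2'
    have hexp : ∑ a ∈ A, ((t a : ℝ) - (t a : ℝ) * ((t a : ℝ) - 1) / 2)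
        = (3 / 2) * S1R - (1 / 2) * S2R := by
      rw [hS1Rdef, hS2Rdef, Nat.cast_sum, Nat.cast_sum]
      push_cast
      rw [Finset.mul_sum, Finset.mul_sum, ← Finset.sum_sub_distrib]
      exact Finset.sum_congr rfl fun a _ => by ring
    have hmnn : (0 : ℝ) ≤ (m : ℝ) := Nat.cast_nonneg _
    have hMnn : (0 : ℝ) ≤ (M : ℝ) := Nat.cast_nonneg _
    have hdK2nn : (0 : ℝ) ≤ dK2 := by rw [hdK2def]; exact pow_nonneg (Nat.cast_nonneg _) _
    have hdknn : (0 : ℝ) ≤ (d : ℝ) ^ k := by exact pow_nonneg (Nat.cast_nonneg _) _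
    have hS1R : S1R = (m : ℝ) * (B : ℝ) * dK2 := by
      rw [hS1Rdef, hS1']
      push_cast
      ring
    have hS2R : S2R ≤ (m : ℝ) * (B : ℝ) * dK2 + (m : ℝ) * ((m : ℝ) - 1) * (M : ℝ) ^ 2 * dK2 := by
      have hc : S2R ≤ ((m * (B * d ^ (k - 2)) + m * ((m - 1) * (M * M * d ^ (k - 2))) : ℕ) : ℝ) := by
        rw [hS2Rdef]
        exact_mod_cast hS2'
      rcases Nat.eq_zero_or_pos m with hm0 | hm1
      · rw [hm0] at hc
        push_cast at hc
        rw [hm0]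
        push_cast
        linarith
      · push_cast [Nat.cast_sub hm1] at hc
        push_cast
        nlinarith [hc]
    have hBR : (M : ℝ) * ((d : ℝ) - (M : ℝ)) ≤ (B : ℝ) := by
      have h := bad_pairs_lower0 (G := G) D
      rw [← hn, ← hd, ← hMdef, ← hB] at h
      have h' : ((M * (d - M) : ℕ) : ℝ) ≤ (B : ℝ) := by exact_mod_cast h
      rw [Nat.cast_mul, Nat.cast_sub hMled] at h'
      exact h'
    -- Bad lower bound
    have hbadR : ((A.filter fun a => ¬ ∀ i j, a i - a j ∈ D).card : ℝ)
        ≥ ((m : ℝ) * τ * (1 - τ) - (1 / 2) * (m : ℝ) * ((m : ℝ) - 1) * τ ^ 2) * (d : ℝ) ^ k := by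
      have step1 : S1R - (1 / 2) * ((m : ℝ) * ((m : ℝ) - 1) * (M : ℝ) ^ 2 * dK2)
          ≤ ((A.filter fun a => ¬ ∀ i j, a i - a j ∈ D).card : ℝ) := by
        have := hsum
        rw [hexp] at this
        linarith [hS2R]
      have step2 : (m : ℝ) * ((M : ℝ) * ((d : ℝ) - (M : ℝ))) * dK2 ≤ S1R := by
        rw [hS1R]
        have : (m : ℝ) * ((M : ℝ) * ((d : ℝ) - (M : ℝ))) ≤ (m : ℝ) * (B : ℝ) :=
          mul_le_mul_of_nonneg_left hBR hmnn
        exact mul_le_mul_of_nonneg_right this hdK2nn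
      have hsubst : (m : ℝ) * ((M : ℝ) * ((d : ℝ) - (M : ℝ))) * dK2
            - (1 / 2) * ((m : ℝ) * ((m : ℝ) - 1) * (M : ℝ) ^ 2 * dK2)
          = ((m : ℝ) * τ * (1 - τ) - (1 / 2) * (m : ℝ) * ((m : ℝ) - 1) * τ ^ 2) * (d : ℝ) ^ k := by
        rw [hMR, ← hdk2]
        ring
      linarith
    -- final arithmetic
    have hmsR : (k : ℝ) * (k : ℝ) = 2 * (m : ℝ) + (k : ℝ) := by
      have := pairs_card0 k
      rw [← hP, ← hm] at this
      exact_mod_cast this.symm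
    have hτm : τ * ((m : ℝ) + 1) ≤ 1 := by
      have h2 : τ ≤ 2 / ((k : ℝ) ^ 2 - (k : ℝ) + 2) := hτup.trans (min_le_right _ _)
      have hden : (k : ℝ) ^ 2 - (k : ℝ) + 2 = 2 * ((m : ℝ) + 1) := by
        rw [sq]
        linarith [hmsR]
      rw [hden] at h2
      have hpos : (0 : ℝ) < 2 * ((m : ℝ) + 1) := by linarith
      rw [le_div_iff₀ hpos] at h2
      linarith
    have hkey : ((m : ℝ) / 2) * τ
        ≤ (m : ℝ) * τ * (1 - τ) - (1 / 2) * (m : ℝ) * ((m : ℝ) - 1) * τ ^ 2 := by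
      nlinarith [mul_nonneg (mul_nonneg hmnn hτ0.le) (sub_nonneg.mpr hτm)]
    have hcoef : 1 / 4 * (k : ℝ) * ((k : ℝ) - 1) * τ = ((m : ℝ) / 2) * τ := by
      linear_combination (τ / 4) * hmsR
    have hTbad : (T D D k : ℝ)
        = (d : ℝ) ^ k - ((A.filter fun a => ¬ ∀ i j, a i - a j ∈ D).card : ℝ) := by
      have := congrArg (fun x : ℕ => (x : ℝ)) hbad
      push_cast at this
      linarith
    rw [hTbad, hcoef]
    have : ((m : ℝ) / 2) * τ * (d : ℝ) ^ k
        ≤ ((A.filter fun a => ¬ ∀ i j, a i - a j ∈ D).card : ℝ) := by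
      calc ((m : ℝ) / 2) * τ * (d : ℝ) ^ k
          ≤ ((m : ℝ) * τ * (1 - τ) - (1 / 2) * (m : ℝ) * ((m : ℝ) - 1) * τ ^ 2) * (d : ℝ) ^ k :=
            mul_le_mul_of_nonneg_right hkey hdknn
        _ ≤ _ := hbadR
    nlinarith [this]
end

section
/- Let f : ℝ → ℝ be nonnegative, integrable, with supp(f) ⊆ [0,1], and suppose f is not (almost everywhere) constant on its support, so that ρ := ‖f‖₂/‖f‖₁ > 1. Then for any δ with 0 < δ ≤ min{1/(2ρ^{12}), 2^{−8}}, we have sup over x ∈ [−1,1] \ [−δ,δ] of (f∘f)(x)/‖f‖₁² ≥ 1 − 8·max{(2δ)^{1/8}, ln(log_ρ(1/(2δ)))/log_ρ(1/(2δ))}, where (f∘f)(x) := ∫ f(t)f(x+t) dt. -/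
open MeasureTheory Real Set
open scoped ENNReal

private lemma int_shift_prod (f : ℝ → ℝ) (hf1 : Integrable f)
    (hf2 : Integrable fun t => f t ^ 2) (c : ℝ) :
    Integrable (fun t => f t * f (c + t)) := by
  have hm : MemLp f 2 (volume : Measure ℝ) :=
    (memLp_two_iff_integrable_sq hf1.aestronglyMeasurable).mpr hf2
  have hshift_int : Integrable (fun t => f (c + t)) := hf1.comp_add_left c
  have hshift_sq : Integrable (fun t => f (c + t) ^ 2) :=
    (hf2.comp_add_left c : Integrable fun t => f (c + t) ^ 2)
  have hms : MemLp (fun t => f (c + t)) 2 (volume : Measure ℝ) :=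
    (memLp_two_iff_integrable_sq hshift_int.aestronglyMeasurable).mpr hshift_sq
  have hpqr : (1 : ℝ≥0∞) / 1 = 1 / 2 + 1 / 2 := by
    rw [one_div_one, ENNReal.add_halves]
  have := (hms.smul hm : MemLp (f • fun t => f (c + t)) 1 (volume : Measure ℝ))
  have h2 := memLp_one_iff_integrable.mp this
  simpa [Pi.smul_apply, smul_eq_mul, Pi.mul_def] using h2

private lemma shift_prod_le (f : ℝ → ℝ) (hf1 : Integrable f)
    (hf2 : Integrable fun t => f t ^ 2) (c : ℝ) :
    ∫ t, f t * f (c + t) ≤ ∫ t, f t ^ 2 := by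
  have hshift_sq : Integrable (fun t => f (c + t) ^ 2) :=
    (hf2.comp_add_left c : Integrable fun t => f (c + t) ^ 2)
  have hprod := int_shift_prod f hf1 hf2 c
  have hnn : 0 ≤ ∫ t, (f t - f (c + t)) ^ 2 :=
    integral_nonneg fun t => sq_nonneg _
  have hexp : (fun t => (f t - f (c + t)) ^ 2)
      = fun t => f t ^ 2 - 2 * (f t * f (c + t)) + f (c + t) ^ 2 := by
    funext t; ring
  rw [hexp] at hnn
  rw [integral_add (by exact (hf2.sub (hprod.const_mul 2))) hshift_sq,
      integral_sub hf2 (hprod.const_mul 2), MeasureTheory.integral_const_mul] at hnn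
  have hS' : ∫ t, f (c + t) ^ 2 = ∫ t, f t ^ 2 :=
    integral_add_left_eq_self (fun t => f t ^ 2) c
  rw [hS'] at hnn
  linarith

private lemma gram (f : ℝ → ℝ) (hf1 : Integrable f)
    (hf2 : Integrable fun t => f t ^ 2)
    (hsupp : Function.support f ⊆ Set.Icc (0 : ℝ) 1)
    (D : ℝ) (hD0 : 0 ≤ D) (n : ℕ) (hn : 1 ≤ n) :
    ((n : ℝ) * ∫ t, f t) ^ 2 ≤ (1 + ((n : ℝ) - 1) * D) *
      ∑ i ∈ Finset.range n, ∑ j ∈ Finset.range n,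
        ∫ t, f t * f (((i : ℝ) * D - (j : ℝ) * D) + t) := by
  set v : ℝ → ℝ := fun t => ∑ i ∈ Finset.range n, f (t - (i : ℝ) * D) with hv
  set L : ℝ := 1 + ((n : ℝ) - 1) * D with hL
  have hn1 : (1 : ℝ) ≤ (n : ℝ) := by exact_mod_cast hn
  have hLpos : 0 < L := by
    have : 0 ≤ ((n : ℝ) - 1) * D := mul_nonneg (by linarith) hD0
    linarith
  -- v is integrable
  have hv_int : Integrable v :=
    integrable_finset_sum _ (fun i _ => hf1.comp_sub_right ((i : ℝ) * D))
  -- integral of v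
  have h_int_v : ∫ t, v t = (n : ℝ) * ∫ t, f t := by
    simp only [hv]
    rw [integral_finset_sum (f := fun (i : ℕ) (t : ℝ) => f (t - (i : ℝ) * D))
      (Finset.range n) (fun i _ => hf1.comp_sub_right ((i : ℝ) * D))]
    have : ∀ i ∈ Finset.range n, (∫ t, f (t - (i : ℝ) * D)) = ∫ t, f t := by
      intro i _; exact integral_sub_right_eq_self f ((i : ℝ) * D)
    rw [Finset.sum_congr rfl this, Finset.sum_const, Finset.card_range, nsmul_eq_mul]
  -- each pairwise product is integrable
  have hpair_int : ∀ i j : ℕ, Integrable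
      (fun t => f (t - (i : ℝ) * D) * f (t - (j : ℝ) * D)) := by
    intro i j
    have h1 : Integrable (fun s => f s * f (((i : ℝ) * D - (j : ℝ) * D) + s)) :=
      int_shift_prod f hf1 hf2 _
    have h2 := h1.comp_sub_right ((i : ℝ) * D)
    have heq : (fun t => f (t - (i : ℝ) * D) *
        f (((i : ℝ) * D - (j : ℝ) * D) + (t - (i : ℝ) * D)))
        = fun t => f (t - (i : ℝ) * D) * f (t - (j : ℝ) * D) := by
      funext t
      have : ((i : ℝ) * D - (j : ℝ) * D) + (t - (i : ℝ) * D) = t - (j : ℝ) * D := by ring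
      rw [this]
    exact heq ▸ h2
  -- v^2 expansion
  have hv2_eq : (fun t => v t ^ 2) = fun t => ∑ i ∈ Finset.range n,
      ∑ j ∈ Finset.range n, f (t - (i : ℝ) * D) * f (t - (j : ℝ) * D) := by
    funext t
    rw [hv, sq, Finset.sum_mul_sum]
  have hv2_int : Integrable (fun t => v t ^ 2) := by
    rw [hv2_eq]
    exact integrable_finset_sum _ (fun i _ =>
      integrable_finset_sum _ (fun j _ => hpair_int i j))
  -- integral of v^2
  have h_int_v2 : ∫ t, v t ^ 2 = ∑ i ∈ Finset.range n, ∑ j ∈ Finset.range n,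
      ∫ t, f t * f (((i : ℝ) * D - (j : ℝ) * D) + t) := by
    rw [hv2_eq]
    rw [integral_finset_sum (f := fun (i : ℕ) (t : ℝ) => ∑ j ∈ Finset.range n,
        f (t - (i : ℝ) * D) * f (t - (j : ℝ) * D)) (Finset.range n) (fun i _ =>
      integrable_finset_sum _ (fun j _ => hpair_int i j))]
    refine Finset.sum_congr rfl fun i _ => ?_
    rw [integral_finset_sum (f := fun (j : ℕ) (t : ℝ) =>
        f (t - (i : ℝ) * D) * f (t - (j : ℝ) * D)) (Finset.range n)
      (fun j _ => hpair_int i j)]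
    refine Finset.sum_congr rfl fun j _ => ?_
    have heq : (fun t => f (t - (i : ℝ) * D) * f (t - (j : ℝ) * D))
        = fun t => (fun s => f s * f (((i : ℝ) * D - (j : ℝ) * D) + s)) (t - (i : ℝ) * D) := by
      funext t
      simp only []
      have : ((i : ℝ) * D - (j : ℝ) * D) + (t - (i : ℝ) * D) = t - (j : ℝ) * D := by ring
      rw [this]
    rw [heq, integral_sub_right_eq_self (fun s => f s * f (((i : ℝ) * D - (j : ℝ) * D) + s))
      ((i : ℝ) * D)]
  -- support of v
  have hv_zero : ∀ t : ℝ, t ∉ Set.Icc (0 : ℝ) L → v t = 0 := by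
    intro t ht
    rw [hv]
    refine Finset.sum_eq_zero fun i hi => ?_
    by_contra hne
    have hmem := hsupp hne
    rcases hmem with ⟨h1, h2⟩
    have hiD0 : 0 ≤ (i : ℝ) * D := mul_nonneg (Nat.cast_nonneg i) hD0
    have hin : (i : ℝ) ≤ (n : ℝ) - 1 := by
      have : (i : ℝ) + 1 ≤ (n : ℝ) := by exact_mod_cast Finset.mem_range.mp hi
      linarith
    have hiD1 : (i : ℝ) * D ≤ ((n : ℝ) - 1) * D :=
      mul_le_mul_of_nonneg_right hin hD0
    exact ht ⟨by linarith, by linarith⟩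
  -- indicator function
  set χ : ℝ → ℝ := (Set.Icc (0 : ℝ) L).indicator (fun _ => (1 : ℝ)) with hχ
  have hχ_int : Integrable χ := by
    rw [hχ, integrable_indicator_iff measurableSet_Icc]
    exact integrableOn_const measure_Icc_lt_top.ne
  have hχ_intg : ∫ t, χ t = L := by
    rw [hχ, integral_indicator_const _ measurableSet_Icc, Real.volume_real_Icc_of_le (by linarith), smul_eq_mul,
      mul_one, sub_zero]
  set P : ℝ := (n : ℝ) * ∫ t, f t with hP
  -- quadratic expansion
  have hkey : 0 ≤ ∫ t, (P * χ t - L * v t) ^ 2 := integral_nonneg fun t => sq_nonneg _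
  have hexp : (fun t => (P * χ t - L * v t) ^ 2)
      = fun t => P ^ 2 * χ t - 2 * P * L * v t + L ^ 2 * v t ^ 2 := by
    funext t
    by_cases ht : t ∈ Set.Icc (0 : ℝ) L
    · rw [hχ]; rw [Set.indicator_of_mem ht]; ring
    · rw [hχ, Set.indicator_of_notMem ht, hv_zero t ht]; ring
  rw [hexp] at hkey
  have hint1 : Integrable (fun t => P ^ 2 * χ t - 2 * P * L * v t) :=
    (hχ_int.const_mul _).sub (hv_int.const_mul _)
  have hint2 : Integrable (fun t => L ^ 2 * v t ^ 2) := hv2_int.const_mul _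
  rw [integral_add hint1 hint2,
    integral_sub (hχ_int.const_mul _) (hv_int.const_mul _),
    MeasureTheory.integral_const_mul, MeasureTheory.integral_const_mul,
    MeasureTheory.integral_const_mul, hχ_intg, h_int_v, h_int_v2] at hkey
  -- conclude
  set T : ℝ := ∑ i ∈ Finset.range n, ∑ j ∈ Finset.range n,
      ∫ t, f t * f (((i : ℝ) * D - (j : ℝ) * D) + t) with hT
  -- 0 ≤ P^2 * L - 2 P L P + L^2 T
  nlinarith [hkey, hLpos, sq_nonneg P]

private lemma endgame (m u β Z r : ℝ) (hm1 : 1 ≤ m) (hu0 : 0 ≤ u)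
    (h7 : m + 1 ≤ (1 + u) * (r + m * Z)) (hrb : r ≤ m * β)
    (hA : m * u ≤ m * (2 * β)) (hβ0 : 0 < β) (hZ0 : 0 ≤ Z) :
    1 - 3 * β ≤ Z := by
  by_cases hcase : 1 ≤ 3 * β
  · linarith
  · push_neg at hcase
    have h1mD' : (0 : ℝ) < 1 + u := by linarith
    have hb : (1 + u) * r ≤ (1 + u) * (m * β) :=
      mul_le_mul_of_nonneg_left hrb h1mD'.le
    have h9 : m + 1 ≤ (1 + u) * (m * β) + (1 + u) * (m * Z) := by nlinarith [h7, hb]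
    have hC : (0 : ℝ) ≤ m * u * β := by positivity
    have h10 : (1 + u) * (m * (1 - 3 * β)) + (1 + u) * (m * β) ≤ m := by
      nlinarith [hA, hC]
    have h11 : (1 + u) * (m * (1 - 3 * β)) ≤ (1 + u) * (m * Z) := by linarith
    have h12 : m * (1 - 3 * β) ≤ m * Z := le_of_mul_le_mul_left h11 h1mD'
    exact le_of_mul_le_mul_left h12 (by linarith)

theorem stmt19 (f : ℝ → ℝ) (hf0 : ∀ x, 0 ≤ f x) (hf1 : Integrable f)
    (hf2 : Integrable fun t => f t ^ 2)
    (hsupp : Function.support f ⊆ Set.Icc (0 : ℝ) 1)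
    (ρ : ℝ) (hρdef : ρ = (∫ t, f t ^ 2) ^ ((1 : ℝ) / 2) / ∫ t, f t)
    (hρ : 1 < ρ)
    (δ : ℝ) (hδ0 : 0 < δ)
    (hδ1 : δ ≤ min (1 / (2 * ρ ^ 12)) (2 ^ (-8 : ℤ))) :
    sSup ((fun x => (∫ t, f t * f (x + t)) / (∫ t, f t) ^ 2) ''
        (Set.Icc (-1 : ℝ) 1 \ Set.Icc (-δ) δ)) ≥
      1 - 8 * max ((2 * δ) ^ ((1 : ℝ) / 8))
        (Real.log (Real.logb ρ (1 / (2 * δ))) / Real.logb ρ (1 / (2 * δ))) := by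
  have hI0 : 0 ≤ ∫ t, f t := integral_nonneg hf0
  have hS0 : 0 ≤ ∫ t, f t ^ 2 := integral_nonneg fun t => sq_nonneg _
  have hρ0 : 0 < ρ := lt_trans one_pos hρ
  have hIpos : 0 < ∫ t, f t := by
    rcases hI0.lt_or_eq with h | h
    · exact h
    · exfalso; rw [hρdef, ← h, div_zero] at hρ; linarith
  have hI2 : 0 < (∫ t, f t) ^ 2 := pow_pos hIpos 2
  have hrieq : ρ * ∫ t, f t = (∫ t, f t ^ 2) ^ ((1 : ℝ) / 2) := by
    rw [hρdef, div_mul_cancel₀]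
    exact ne_of_gt hIpos
  have hSval : (∫ t, f t ^ 2) = ρ ^ 2 * (∫ t, f t) ^ 2 := by
    have h2 : ((∫ t, f t ^ 2) ^ ((1 : ℝ) / 2)) ^ (2 : ℕ) = ∫ t, f t ^ 2 := by
      rw [← Real.rpow_natCast ((∫ t, f t ^ 2) ^ ((1 : ℝ) / 2)) 2,
        ← Real.rpow_mul hS0]
      norm_num
    calc (∫ t, f t ^ 2) = ((∫ t, f t ^ 2) ^ ((1 : ℝ) / 2)) ^ (2 : ℕ) := h2.symm
      _ = (ρ * ∫ t, f t) ^ (2 : ℕ) := by rw [hrieq]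
      _ = ρ ^ 2 * (∫ t, f t) ^ 2 := by ring
  -- the target set and sup
  set 𝒮 : Set ℝ := ((fun x => (∫ t, f t * f (x + t)) / (∫ t, f t) ^ 2) ''
    (Set.Icc (-1 : ℝ) 1 \ Set.Icc (-δ) δ)) with h𝒮
  set Z : ℝ := sSup 𝒮 with hZdef
  set D : ℝ := 2 * δ with hD
  have hD0 : 0 < D := by rw [hD]; linarith
  have hD128 : D ≤ 1 / 128 := by
    have h8 : δ ≤ (2 : ℝ) ^ (-8 : ℤ) := le_trans hδ1 (min_le_right _ _)
    have h9 : ((2 : ℝ) ^ (-8 : ℤ)) = 1 / 256 := by norm_num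
    rw [h9] at h8
    rw [hD]; linarith
  have hD1 : D ≤ 1 := by linarith
  have hρ12 : ρ ^ 12 * D ≤ 1 := by
    have h1 : δ ≤ 1 / (2 * ρ ^ 12) := le_trans hδ1 (min_le_left _ _)
    have h2 : (0 : ℝ) < 2 * ρ ^ 12 := by positivity
    rw [le_div_iff₀ h2] at h1
    calc ρ ^ 12 * D = δ * (2 * ρ ^ 12) := by rw [hD]; ring
      _ ≤ 1 := h1
  have hρ2le : ρ ^ 2 ≤ D ^ (-(1 / 6) : ℝ) := by
    have h1 : ρ ^ 12 ≤ D⁻¹ := by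
      rw [← one_div]
      exact (le_div_iff₀ hD0).mpr hρ12
    have h2 : (ρ ^ 12 : ℝ) = (ρ ^ 2) ^ (6 : ℕ) := by ring
    have h3 : ((ρ ^ 2) ^ (6 : ℕ) : ℝ) ^ ((1 : ℝ) / 6) ≤ (D⁻¹) ^ ((1 : ℝ) / 6) :=
      Real.rpow_le_rpow (by positivity) (h2 ▸ h1) (by norm_num)
    have h4 : ((ρ ^ 2) ^ (6 : ℕ) : ℝ) ^ ((1 : ℝ) / 6) = ρ ^ 2 := by
      rw [← Real.rpow_natCast (ρ ^ 2) 6, ← Real.rpow_mul (sq_nonneg ρ)]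
      norm_num
    have h5 : (D⁻¹ : ℝ) ^ ((1 : ℝ) / 6) = D ^ (-(1 / 6) : ℝ) := by
      rw [← Real.rpow_neg_one D, ← Real.rpow_mul hD0.le]
      norm_num
    rw [h4, h5] at h3
    exact h3
  -- the scale count m
  set m : ℕ := ⌈D ^ (-(1 / 2) : ℝ)⌉₊ with hm
  have hr0 : (0 : ℝ) < D ^ (-(1 / 2) : ℝ) := Real.rpow_pos_of_pos hD0 _
  have hm0 : 0 < m := Nat.ceil_pos.mpr hr0
  have hmge : D ^ (-(1 / 2) : ℝ) ≤ (m : ℝ) := Nat.le_ceil _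
  have hmle : (m : ℝ) < D ^ (-(1 / 2) : ℝ) + 1 := Nat.ceil_lt_add_one hr0.le
  have hm1 : (1 : ℝ) ≤ (m : ℝ) := by exact_mod_cast hm0
  have hmnn : (0 : ℝ) ≤ (m : ℝ) := by linarith
  have hhalf : D ^ (-(1 / 2) : ℝ) * D = D ^ ((1 : ℝ) / 2) := by
    nth_rewrite 2 [← Real.rpow_one D]
    rw [← Real.rpow_add hD0]
    norm_num
  have hsixth : D ^ (-(1 / 2) : ℝ) * D ^ ((1 : ℝ) / 3) = D ^ (-(1 / 6) : ℝ) := by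
    rw [← Real.rpow_add hD0]
    norm_num
  set β : ℝ := D ^ ((1 : ℝ) / 8) with hβ
  have hβ0 : 0 < β := Real.rpow_pos_of_pos hD0 _
  have hle_β : ∀ a : ℝ, (1 : ℝ) / 8 ≤ a → D ^ a ≤ β :=
    fun a ha => Real.rpow_le_rpow_of_exponent_ge hD0 hD1 ha
  have hD_le_β : D ≤ β := by
    have := hle_β 1 (by norm_num)
    rwa [Real.rpow_one] at this
  have h12β : D ^ ((1 : ℝ) / 2) ≤ β := hle_β _ (by norm_num)
  have h13β : D ^ ((1 : ℝ) / 3) ≤ β := hle_β _ (by norm_num)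
  have hmD_le : (m : ℝ) * D ≤ D ^ ((1 : ℝ) / 2) + D := by
    have h := mul_le_mul_of_nonneg_right hmle.le hD0.le
    rw [add_mul, one_mul, hhalf] at h
    exact h
  have hmD0 : (0 : ℝ) ≤ (m : ℝ) * D := mul_nonneg hmnn hD0.le
  have hmD1 : (m : ℝ) * D ≤ 1 := by
    have h1 : D ^ ((1 : ℝ) / 2) ≤ ((1 : ℝ) / 128) ^ ((1 : ℝ) / 2) :=
      Real.rpow_le_rpow hD0.le hD128 (by norm_num)
    have h2 : ((1 : ℝ) / 128) ^ ((1 : ℝ) / 2) ≤ ((1 : ℝ) / 4) ^ ((1 : ℝ) / 2) :=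
      Real.rpow_le_rpow (by norm_num) (by norm_num) (by norm_num)
    have h4 : ((1 : ℝ) / 4) ^ ((1 : ℝ) / 2) = 1 / 2 := by
      rw [show ((1 : ℝ) / 4) = ((1 : ℝ) / 2) ^ (2 : ℕ) by norm_num,
        ← Real.rpow_natCast ((1 : ℝ) / 2) 2, ← Real.rpow_mul (by norm_num)]
      norm_num
    rw [h4] at h2
    linarith
  have hmD2β : (m : ℝ) * D ≤ 2 * β := by linarith
  have hρmβ : ρ ^ 2 ≤ (m : ℝ) * β := by
    have h1 : D ^ (-(1 / 6) : ℝ) ≤ (m : ℝ) * D ^ ((1 : ℝ) / 3) := by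
      rw [← hsixth]
      exact mul_le_mul_of_nonneg_right hmge (Real.rpow_pos_of_pos hD0 _).le
    have h2 : (m : ℝ) * D ^ ((1 : ℝ) / 3) ≤ (m : ℝ) * β :=
      mul_le_mul_of_nonneg_left h13β hmnn
    linarith
  -- sup facts
  have hBdd : BddAbove 𝒮 := by
    refine ⟨(∫ t, f t ^ 2) / (∫ t, f t) ^ 2, ?_⟩
    rintro y ⟨x, hx, rfl⟩
    exact (div_le_div_iff_of_pos_right hI2).mpr (shift_prod_le f hf1 hf2 x)
  have hmemA : ∀ x : ℝ, D ≤ |x| → |x| ≤ 1 →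
      x ∈ Set.Icc (-1 : ℝ) 1 \ Set.Icc (-δ) δ := by
    intro x h1 h2
    refine ⟨⟨(abs_le.mp h2).1, (abs_le.mp h2).2⟩, fun hc => ?_⟩
    have : |x| ≤ δ := abs_le.mpr ⟨hc.1, hc.2⟩
    rw [hD] at h1
    linarith
  have hle_sSup : ∀ x : ℝ, D ≤ |x| → |x| ≤ 1 →
      (∫ t, f t * f (x + t)) ≤ Z * (∫ t, f t) ^ 2 := by
    intro x h1 h2
    have hx : (∫ t, f t * f (x + t)) / (∫ t, f t) ^ 2 ≤ Z :=
      le_csSup hBdd (Set.mem_image_of_mem _ (hmemA x h1 h2))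
    rw [div_le_iff₀ hI2] at hx
    linarith
  have hZ0 : 0 ≤ Z := by
    have hDabs : |D| = D := abs_of_pos hD0
    have hmem := hmemA D (by rw [hDabs]) (by rw [hDabs]; linarith)
    have h1 : (∫ t, f t * f (D + t)) / (∫ t, f t) ^ 2 ≤ Z :=
      le_csSup hBdd (Set.mem_image_of_mem _ hmem)
    have h2 : 0 ≤ (∫ t, f t * f (D + t)) / (∫ t, f t) ^ 2 :=
      div_nonneg (integral_nonneg fun t => mul_nonneg (hf0 t) (hf0 _)) hI2.le
    linarith
  -- Gram inequality with n = m + 1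
  have hgram := gram f hf1 hf2 hsupp D hD0.le (m + 1) (by omega)
  have hcastm : ((m + 1 : ℕ) : ℝ) = (m : ℝ) + 1 := by push_cast; ring
  rw [hcastm, show (1 + (((m : ℝ) + 1) - 1) * D) = 1 + (m : ℝ) * D by ring] at hgram
  -- row bound
  have hrow : ∀ i ∈ Finset.range (m + 1),
      (∑ j ∈ Finset.range (m + 1), ∫ t, f t * f (((i : ℝ) * D - (j : ℝ) * D) + t))
        ≤ (∫ t, f t ^ 2) + (m : ℝ) * (Z * (∫ t, f t) ^ 2) := by
    intro i hi
    have hstep : ∀ j ∈ Finset.range (m + 1),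
        (∫ t, f t * f (((i : ℝ) * D - (j : ℝ) * D) + t))
          ≤ if j = i then (∫ t, f t ^ 2) else Z * (∫ t, f t) ^ 2 := by
      intro j hj
      by_cases hij : j = i
      · subst hij
        rw [if_pos rfl]
        have : (∫ t, f t * f (((j : ℝ) * D - (j : ℝ) * D) + t)) = ∫ t, f t ^ 2 := by
          simp [sq]
        rw [this]
      · rw [if_neg hij]
        have hij' : i ≠ j := fun h => hij h.symm
        have hine : ((i : ℤ) - (j : ℤ)) ≠ 0 := by
          intro h
          apply hij'
          omega
        have h1k : (1 : ℤ) ≤ |(i : ℤ) - (j : ℤ)| := Int.one_le_abs hine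
        have him : i ≤ m := by
          have := Finset.mem_range.mp hi; omega
        have hjm : j ≤ m := by
          have := Finset.mem_range.mp hj; omega
        have hkm : |(i : ℤ) - (j : ℤ)| ≤ (m : ℤ) := by
          rw [abs_le]; omega
        have hx : (i : ℝ) * D - (j : ℝ) * D = (((i : ℤ) - (j : ℤ) : ℤ) : ℝ) * D := by
          push_cast; ring
        have habs : |(i : ℝ) * D - (j : ℝ) * D|
            = ((|(i : ℤ) - (j : ℤ)| : ℤ) : ℝ) * D := by
          rw [hx, abs_mul, abs_of_pos hD0, Int.cast_abs]
        have h1k' : (1 : ℝ) ≤ ((|(i : ℤ) - (j : ℤ)| : ℤ) : ℝ) := by exact_mod_cast h1k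
        have hkm' : ((|(i : ℤ) - (j : ℤ)| : ℤ) : ℝ) ≤ (m : ℝ) := by exact_mod_cast hkm
        apply hle_sSup
        · rw [habs]
          calc D = 1 * D := (one_mul D).symm
            _ ≤ ((|(i : ℤ) - (j : ℤ)| : ℤ) : ℝ) * D :=
              mul_le_mul_of_nonneg_right h1k' hD0.le
        · rw [habs]
          calc ((|(i : ℤ) - (j : ℤ)| : ℤ) : ℝ) * D ≤ (m : ℝ) * D :=
              mul_le_mul_of_nonneg_right hkm' hD0.le
            _ ≤ 1 := hmD1
    calc (∑ j ∈ Finset.range (m + 1), ∫ t, f t * f (((i : ℝ) * D - (j : ℝ) * D) + t))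
        ≤ ∑ j ∈ Finset.range (m + 1),
          (if j = i then (∫ t, f t ^ 2) else Z * (∫ t, f t) ^ 2) :=
          Finset.sum_le_sum hstep
      _ = (∫ t, f t ^ 2) + (m : ℝ) * (Z * (∫ t, f t) ^ 2) := by
          have hsplit : ∀ j : ℕ, (if j = i then (∫ t, f t ^ 2) else Z * (∫ t, f t) ^ 2)
              = Z * (∫ t, f t) ^ 2
                + (if j = i then ((∫ t, f t ^ 2) - Z * (∫ t, f t) ^ 2) else 0) := by
            intro j
            by_cases h : j = i
            · rw [if_pos h, if_pos h]; ring
            · rw [if_neg h, if_neg h]; ring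
          rw [Finset.sum_congr rfl fun j _ => hsplit j, Finset.sum_add_distrib,
            Finset.sum_const, Finset.card_range,
            Finset.sum_ite_eq' (Finset.range (m + 1)) i
              (fun _ => (∫ t, f t ^ 2) - Z * (∫ t, f t) ^ 2), if_pos hi,
            nsmul_eq_mul]
          push_cast
          ring
  have hsum : (∑ i ∈ Finset.range (m + 1), ∑ j ∈ Finset.range (m + 1),
      ∫ t, f t * f (((i : ℝ) * D - (j : ℝ) * D) + t))
        ≤ ((m : ℝ) + 1) * ((∫ t, f t ^ 2) + (m : ℝ) * (Z * (∫ t, f t) ^ 2)) := by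
    calc (∑ i ∈ Finset.range (m + 1), ∑ j ∈ Finset.range (m + 1),
        ∫ t, f t * f (((i : ℝ) * D - (j : ℝ) * D) + t))
        ≤ ∑ _i ∈ Finset.range (m + 1),
            ((∫ t, f t ^ 2) + (m : ℝ) * (Z * (∫ t, f t) ^ 2)) :=
          Finset.sum_le_sum hrow
      _ = ((m : ℝ) + 1) * ((∫ t, f t ^ 2) + (m : ℝ) * (Z * (∫ t, f t) ^ 2)) := by
          rw [Finset.sum_const, Finset.card_range, nsmul_eq_mul]
          push_cast
          ring
  have h1mD : (0 : ℝ) ≤ 1 + (m : ℝ) * D := by linarith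
  have h6' : (((m : ℝ) + 1) * ∫ t, f t) ^ 2
      ≤ (1 + (m : ℝ) * D) * (((m : ℝ) + 1)
        * ((∫ t, f t ^ 2) + (m : ℝ) * (Z * (∫ t, f t) ^ 2))) :=
    le_trans hgram (mul_le_mul_of_nonneg_left hsum h1mD)
  have hmp1 : (0 : ℝ) < (m : ℝ) + 1 := by linarith
  have h6 : ((m : ℝ) + 1) * (∫ t, f t) ^ 2
      ≤ (1 + (m : ℝ) * D) * ((∫ t, f t ^ 2) + (m : ℝ) * (Z * (∫ t, f t) ^ 2)) := by
    apply le_of_mul_le_mul_left _ hmp1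
    calc ((m : ℝ) + 1) * (((m : ℝ) + 1) * (∫ t, f t) ^ 2)
        = (((m : ℝ) + 1) * ∫ t, f t) ^ 2 := by ring
      _ ≤ (1 + (m : ℝ) * D) * (((m : ℝ) + 1)
          * ((∫ t, f t ^ 2) + (m : ℝ) * (Z * (∫ t, f t) ^ 2))) := h6'
      _ = ((m : ℝ) + 1) * ((1 + (m : ℝ) * D)
          * ((∫ t, f t ^ 2) + (m : ℝ) * (Z * (∫ t, f t) ^ 2))) := by ring
  have h7 : ((m : ℝ) + 1) ≤ (1 + (m : ℝ) * D) * (ρ ^ 2 + (m : ℝ) * Z) := by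
    have h6'' : ((m : ℝ) + 1) * (∫ t, f t) ^ 2
        ≤ ((1 + (m : ℝ) * D) * (ρ ^ 2 + (m : ℝ) * Z)) * (∫ t, f t) ^ 2 := by
      calc ((m : ℝ) + 1) * (∫ t, f t) ^ 2
          ≤ (1 + (m : ℝ) * D) * ((∫ t, f t ^ 2) + (m : ℝ) * (Z * (∫ t, f t) ^ 2)) := h6
        _ = ((1 + (m : ℝ) * D) * (ρ ^ 2 + (m : ℝ) * Z)) * (∫ t, f t) ^ 2 := by
            rw [hSval]; ring
    exact le_of_mul_le_mul_right h6'' hI2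
  clear_value 𝒮 Z D m β
  have hZfinal : 1 - 3 * β ≤ Z :=
    endgame (m : ℝ) ((m : ℝ) * D) β Z (ρ ^ 2) hm1 hmD0 h7 hρmβ
      (mul_le_mul_of_nonneg_left hmD2β hmnn) hβ0 hZ0
  rw [ge_iff_le]
  calc 1 - 8 * max β (Real.log (Real.logb ρ (1 / D)) / Real.logb ρ (1 / D))
      ≤ 1 - 8 * β := by
        linarith [le_max_left β (Real.log (Real.logb ρ (1 / D)) / Real.logb ρ (1 / D)),
          hβ0.le]
    _ ≤ 1 - 3 * β := by linarith
    _ ≤ Z := hZfinal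
end
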